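/- arXiv:2510.13181 — 3 statements merged into one kernel-verified Lean document; each statement's English description precedes it below -/
import Mathlib

section
/- Let α>1. There exist ε₀>0 and C>0 (depending only on α) with the following property. Let V:ℝ→ℝ be 2π-periodic and C⁴ with ‖V−cos‖_{H⁴}≤ε₀. Let k∈αℤ∖{0}, λ∈ℝ, ε∈ℝ∖{0}. Suppose φ,F:ℝ→ℂ are 2π-periodic, φ is C², F is C¹, and with f:=φ''−k²φ one has V(y)(f(y)+φ(y))−(λ+iε)f(y)=F(y) for all y. Then |ε|·k²·(‖φ'‖_{L²}²+k²‖φ‖_{L²}²)^{1/2} ≤ C·(‖F'‖_{L²}²+k²‖F‖_{L²}²)^{1/2}. -/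
open Real MeasureTheory

/-- The `L²` norm over one period `[0,2π]` of a complex-valued function. -/
noncomputable def l2C (g : ℝ → ℂ) : ℝ := Real.sqrt (∫ y in (0:ℝ)..(2*π), ‖g y‖^2)

/-- The `L²` norm over one period `[0,2π]` of a real-valued function. -/
noncomputable def l2R (g : ℝ → ℝ) : ℝ := Real.sqrt (∫ y in (0:ℝ)..(2*π), (g y)^2)

/-- The `H⁴` norm over one period `[0,2π]` of a real-valued function. -/
noncomputable def H4R (g : ℝ → ℝ) : ℝ :=
  Real.sqrt (∑ j ∈ Finset.range 5, (l2R (iteratedDeriv j g))^2)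

/-- The norm `‖(∂_y,k) g‖_{L²} = (‖g'‖_{L²}² + k²‖g‖_{L²}²)^{1/2}`. -/
noncomputable def H1k (k : ℝ) (g : ℝ → ℂ) : ℝ :=
  Real.sqrt ((l2C (deriv g))^2 + k^2 * (l2C g)^2)

/-!
Write `f = Δ_k φ = φ'' - k²φ` and `g = f + φ`, so that the equation reads `F = V g - (λ + iε) f`.
Pair it with `g` in `L²`: `∫ V |g|²` is real since `V` is, and integration by parts gives
`⟨f, g⟩ = ‖f‖² - ‖(∂_y, k) φ‖²`, also real. Taking imaginary parts,
`|ε| (‖f‖² - ‖(∂_y, k) φ‖²) ≤ ‖F‖ ‖g‖`. The same integration by parts gives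
`k² ‖(∂_y, k) φ‖² ≤ ‖f‖²` and `‖g‖ ≤ ‖f‖`, so for `|k| ≥ α > 1` the pairing is coercive:
`|ε| ‖f‖ ≤ α²/(α²-1) ‖F‖`, whence `|ε| k² ‖(∂_y, k) φ‖ ≤ |ε| |k| ‖f‖ ≤ α²/(α²-1) ‖(∂_y, k) F‖`.
-/

open ComplexConjugate

noncomputable def laplacianK (k : ℝ) (φ : ℝ → ℂ) (y : ℝ) : ℂ :=
  deriv (deriv φ) y - (k : ℂ) ^ 2 * φ y

lemma Function.Periodic.deriv {𝕜 F : Type*} [NontriviallyNormedField 𝕜] [NormedAddCommGroup F]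
    [NormedSpace 𝕜 F] {f : 𝕜 → F} {c : 𝕜} (hf : f.Periodic c) : (_root_.deriv f).Periodic c := by
  intro x
  rw [← deriv_comp_add_const]
  exact congrArg (fun g => _root_.deriv g x) (funext hf)

lemma integral_deriv_mul_conj_of_periodic {u v : ℝ → ℂ} {T : ℝ} (hu : ContDiff ℝ 1 u)
    (hv : ContDiff ℝ 1 v) (hTu : u.Periodic T) (hTv : v.Periodic T) :
    ∫ y in (0:ℝ)..T, deriv u y * conj (v y) = -∫ y in (0:ℝ)..T, u y * conj (deriv v y) := by
  have hud := hu.differentiable one_ne_zero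
  have hvd := hv.differentiable one_ne_zero
  have hu' := hu.continuous_deriv le_rfl
  have hv' := hv.continuous_deriv le_rfl
  have h := intervalIntegral.integral_deriv_mul_eq_sub (a := 0) (b := T)
    (v := fun y => conj (v y)) (v' := fun y => conj (deriv v y))
    (fun x _ => (hud x).hasDerivAt) (fun x _ => (hvd x).hasDerivAt.star)
    (hu'.intervalIntegrable _ _) ((Complex.continuous_conj.comp hv').intervalIntegrable _ _)
  rw [intervalIntegral.integral_add (f := fun y => deriv u y * conj (v y))
    (g := fun y => u y * conj (deriv v y))
    ((hu'.mul (Complex.continuous_conj.comp hv.continuous)).intervalIntegrable _ _)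
    ((hu.continuous.mul (Complex.continuous_conj.comp hv')).intervalIntegrable _ _)] at h
  have huT : u T = u 0 := by simpa using hTu 0
  have hvT : v T = v 0 := by simpa using hTv 0
  rw [huT, hvT, sub_self] at h
  linear_combination h

lemma l2C_nonneg (u : ℝ → ℂ) : 0 ≤ l2C u := sqrt_nonneg _

lemma l2C_sq (u : ℝ → ℂ) : l2C u ^ 2 = ∫ y in (0:ℝ)..(2*π), ‖u y‖ ^ 2 :=
  sq_sqrt (intervalIntegral.integral_nonneg two_pi_pos.le fun _ _ => sq_nonneg _)

lemma H1k_sq (k : ℝ) (u : ℝ → ℂ) : H1k k u ^ 2 = l2C (deriv u) ^ 2 + k ^ 2 * l2C u ^ 2 :=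
  sq_sqrt (by positivity)

lemma integral_mul_conj_self (u : ℝ → ℂ) :
    ∫ y in (0:ℝ)..(2*π), u y * conj (u y) = ((l2C u ^ 2 : ℝ) : ℂ) := by
  simp_rw [Complex.mul_conj', l2C_sq, ← intervalIntegral.integral_ofReal]
  norm_cast

lemma memLp_two_restrict_Ioc {E : Type*} [NormedAddCommGroup E] {u : ℝ → E} (hu : Continuous u)
    (a b : ℝ) :
    MemLp u 2 (volume.restrict (Set.Ioc a b)) :=
  (memLp_two_iff_integrable_sq_norm hu.aestronglyMeasurable).2
    (hu.norm.pow 2).integrableOn_Ioc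

lemma norm_integral_mul_conj_le {u v : ℝ → ℂ} (hu : Continuous u) (hv : Continuous v) :
    ‖∫ y in (0:ℝ)..(2*π), u y * conj (v y)‖ ≤ l2C u * l2C v := by
  have h := integral_mul_norm_le_Lp_mul_Lq Real.HolderConjugate.two_two
    (by simpa using memLp_two_restrict_Ioc hu 0 (2*π))
    (by simpa using memLp_two_restrict_Ioc hv 0 (2*π))
  simp only [← sqrt_eq_rpow, Real.rpow_two] at h
  refine (intervalIntegral.norm_integral_le_integral_norm two_pi_pos.le).trans ?_
  simp only [norm_mul, Complex.norm_conj]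
  rwa [intervalIntegral.integral_of_le two_pi_pos.le, l2C, l2C,
    intervalIntegral.integral_of_le two_pi_pos.le, intervalIntegral.integral_of_le two_pi_pos.le]

lemma l2C_add_sq {u v : ℝ → ℂ} (hu : Continuous u) (hv : Continuous v) :
    l2C (u + v) ^ 2 = l2C u ^ 2 + 2 * (∫ y in (0:ℝ)..(2*π), u y * conj (v y)).re + l2C v ^ 2 := by
  have hre := intervalIntegral.intervalIntegral_re
    ((hu.mul (Complex.continuous_conj.comp hv)).intervalIntegrable (μ := volume) 0 (2*π))
  simp only [RCLike.re_to_complex, Pi.mul_apply, Function.comp_apply] at hre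
  simp only [l2C_sq, Pi.add_apply, ← Complex.normSq_eq_norm_sq, Complex.normSq_add]
  rw [intervalIntegral.integral_add, intervalIntegral.integral_add,
    intervalIntegral.integral_const_mul, ← hre]
  · ring
  all_goals exact Continuous.intervalIntegrable (by fun_prop) _ _

section Laplacian

variable {k : ℝ} {φ : ℝ → ℂ}

lemma continuous_laplacianK (hφ : ContDiff ℝ 2 φ) : Continuous (laplacianK k φ) :=
  (hφ.deriv' (n := 1)).continuous_deriv le_rfl |>.sub (continuous_const.mul hφ.continuous)

lemma integral_laplacianK_mul_conj (hφ : ContDiff ℝ 2 φ) (hper : φ.Periodic (2*π)) :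
    ∫ y in (0:ℝ)..(2*π), laplacianK k φ y * conj (φ y) = -((H1k k φ ^ 2 : ℝ) : ℂ) := by
  have hφ' : ContDiff ℝ 1 (deriv φ) := hφ.deriv'
  have hφ'' := hφ'.continuous_deriv le_rfl
  have hφc := hφ.continuous
  rw [H1k_sq, Complex.ofReal_add, Complex.ofReal_mul, ← integral_mul_conj_self,
    ← integral_mul_conj_self]
  unfold laplacianK
  simp only [sub_mul, mul_assoc]
  rw [intervalIntegral.integral_sub, intervalIntegral.integral_const_mul,
    integral_deriv_mul_conj_of_periodic hφ' (hφ.of_le one_le_two) hper.deriv hper]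
  · push_cast; ring
  all_goals exact Continuous.intervalIntegrable (by fun_prop) _ _

lemma sq_mul_H1k_sq_le (hφ : ContDiff ℝ 2 φ) (hper : φ.Periodic (2*π)) :
    k ^ 2 * H1k k φ ^ 2 ≤ l2C (laplacianK k φ) ^ 2 := by
  have hE : H1k k φ ^ 2 ≤ l2C (laplacianK k φ) * l2C φ := by
    simpa [integral_laplacianK_mul_conj hφ hper] using
      norm_integral_mul_conj_le (continuous_laplacianK (k := k) hφ) hφ.continuous
  have hA : k ^ 2 * l2C φ ^ 2 ≤ H1k k φ ^ 2 := by
    rw [H1k_sq]; linarith [sq_nonneg (l2C (deriv φ))]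
  rcases (sq_nonneg (H1k k φ)).eq_or_lt with hE0 | hE0
  · rw [← hE0, mul_zero]; exact sq_nonneg _
  refine le_of_mul_le_mul_right ?_ hE0
  calc k ^ 2 * H1k k φ ^ 2 * H1k k φ ^ 2 = k ^ 2 * (H1k k φ ^ 2) ^ 2 := by ring
    _ ≤ k ^ 2 * (l2C (laplacianK k φ) * l2C φ) ^ 2 := by gcongr
    _ = l2C (laplacianK k φ) ^ 2 * (k ^ 2 * l2C φ ^ 2) := by ring
    _ ≤ l2C (laplacianK k φ) ^ 2 * H1k k φ ^ 2 := by gcongr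

lemma l2C_laplacianK_add_le (hk : 1 ≤ k ^ 2) (hφ : ContDiff ℝ 2 φ) (hper : φ.Periodic (2*π)) :
    l2C (laplacianK k φ + φ) ≤ l2C (laplacianK k φ) := by
  have h := l2C_add_sq (continuous_laplacianK (k := k) hφ) hφ.continuous
  rw [integral_laplacianK_mul_conj hφ hper, H1k_sq] at h
  simp only [Complex.neg_re, Complex.ofReal_re] at h
  refine (sq_le_sq₀ (l2C_nonneg _) (l2C_nonneg _)).1 ?_
  nlinarith [sq_nonneg (l2C (deriv φ)), mul_le_mul_of_nonneg_right hk (sq_nonneg (l2C φ))]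

lemma integral_laplacianK_mul_conj_add (hφ : ContDiff ℝ 2 φ) (hper : φ.Periodic (2*π)) :
    ∫ y in (0:ℝ)..(2*π), laplacianK k φ y * conj ((laplacianK k φ + φ) y)
      = ((l2C (laplacianK k φ) ^ 2 - H1k k φ ^ 2 : ℝ) : ℂ) := by
  have hf := continuous_laplacianK (k := k) hφ
  have hφc := hφ.continuous
  simp only [Pi.add_apply, map_add, mul_add]
  rw [intervalIntegral.integral_add, integral_mul_conj_self, integral_laplacianK_mul_conj hφ hper]
  · push_cast; ring
  all_goals exact Continuous.intervalIntegrable (by fun_prop) _ _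

lemma abs_mul_sub_le_of_resolvent_eq {V : ℝ → ℝ} (hV : Continuous V) {lam ε : ℝ} {F : ℝ → ℂ}
    (hφ : ContDiff ℝ 2 φ) (hper : φ.Periodic (2*π))
    (heq : ∀ y, (V y : ℂ) * (laplacianK k φ y + φ y)
      - ((lam : ℂ) + Complex.I * ε) * laplacianK k φ y = F y) :
    |ε| * (l2C (laplacianK k φ) ^ 2 - H1k k φ ^ 2)
      ≤ l2C F * l2C (laplacianK k φ + φ) := by
  set f := laplacianK k φ
  set g := f + φ
  set Q := l2C f ^ 2 - H1k k φ ^ 2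
  have hf : Continuous f := continuous_laplacianK hφ
  have hφc := hφ.continuous
  have hg : Continuous g := hf.add hφc
  have hF : Continuous F := by rw [← funext heq]; fun_prop
  have hVg : ∀ y, (V y : ℂ) * (g y * conj (g y)) = ((V y * ‖g y‖ ^ 2 : ℝ) : ℂ) := by
    intro y; rw [Complex.mul_conj']; push_cast; ring
  have hpair : ∫ y in (0:ℝ)..(2*π), F y * conj (g y)
      = ((∫ y in (0:ℝ)..(2*π), V y * ‖g y‖ ^ 2 : ℝ) : ℂ) - ((lam : ℂ) + Complex.I * ε) * Q := by
    rw [intervalIntegral.integral_congr (g := fun y =>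
        ((V y * ‖g y‖ ^ 2 : ℝ) : ℂ) - ((lam : ℂ) + Complex.I * ε) * (f y * conj (g y)))
        fun y _ => by dsimp only; rw [← heq, ← hVg]; simp only [g, Pi.add_apply]; ring]
    rw [intervalIntegral.integral_sub, intervalIntegral.integral_const_mul,
      integral_laplacianK_mul_conj_add hφ hper, intervalIntegral.integral_ofReal]
    all_goals exact Continuous.intervalIntegrable (by fun_prop) _ _
  have him : (∫ y in (0:ℝ)..(2*π), F y * conj (g y)).im = -(ε * Q) := by
    simp [hpair]
  calc |ε| * Q ≤ |ε * Q| := by rw [abs_mul]; gcongr; exact le_abs_self Q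
    _ = |(∫ y in (0:ℝ)..(2*π), F y * conj (g y)).im| := by rw [him, abs_neg]
    _ ≤ ‖∫ y in (0:ℝ)..(2*π), F y * conj (g y)‖ := Complex.abs_im_le_norm _
    _ ≤ l2C F * l2C g := norm_integral_mul_conj_le hF hg

end Laplacian

lemma abs_mul_l2C_le_H1k (k : ℝ) (u : ℝ → ℂ) : |k| * l2C u ≤ H1k k u := by
  refine Real.le_sqrt_of_sq_le ?_
  rw [mul_pow, sq_abs]
  linarith [sq_nonneg (l2C (deriv u))]

lemma sq_le_sq_mul_intCast (a : ℝ) {n : ℤ} (hn : n ≠ 0) : a ^ 2 ≤ (a * n) ^ 2 := by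
  have hn2 : (1 : ℝ) ≤ (n : ℝ) ^ 2 := by
    exact_mod_cast (one_le_sq_iff_one_le_abs n).2 (Int.one_le_abs hn)
  rw [mul_pow]
  exact le_mul_of_one_le_right (sq_nonneg a) hn2

lemma abs_mul_sq_mul_le {α k ε H N P Q : ℝ} (hα : 1 < α) (hk : α ^ 2 ≤ k ^ 2) (hN : 0 ≤ N)
    (hP : 0 ≤ P) (hH : 0 ≤ H) (hkH : k ^ 2 * H ^ 2 ≤ N ^ 2)
    (hε : |ε| * (N ^ 2 - H ^ 2) ≤ P * N) (hQ : |k| * P ≤ Q) :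
    |ε| * k ^ 2 * H ≤ α ^ 2 / (α ^ 2 - 1) * Q := by
  have hα2 : 0 < α ^ 2 - 1 := by nlinarith
  have hεN : |ε| * N ≤ α ^ 2 / (α ^ 2 - 1) * P := by
    rcases hN.eq_or_lt with rfl | hN
    · rw [mul_zero]; positivity
    rw [div_mul_eq_mul_div, le_div_iff₀ hα2]
    refine le_of_mul_le_mul_right ?_ hN
    have hcoer : (α ^ 2 - 1) * N ^ 2 ≤ α ^ 2 * (N ^ 2 - H ^ 2) := by
      nlinarith [mul_le_mul_of_nonneg_right hk (sq_nonneg H)]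
    nlinarith [mul_le_mul_of_nonneg_left hcoer (abs_nonneg ε)]
  have hkHN : |k| * H ≤ N := by
    rw [← sq_le_sq₀ (by positivity) hN, mul_pow, sq_abs]; exact hkH
  calc |ε| * k ^ 2 * H = |ε| * |k| * (|k| * H) := by rw [← sq_abs k]; ring
    _ ≤ |ε| * |k| * N := by gcongr
    _ = |k| * (|ε| * N) := by ring
    _ ≤ |k| * (α ^ 2 / (α ^ 2 - 1) * P) := by gcongr
    _ = α ^ 2 / (α ^ 2 - 1) * (|k| * P) := by ring
    _ ≤ α ^ 2 / (α ^ 2 - 1) * Q := by gcongr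

theorem stmt3 (α : ℝ) (hα : 1 < α) :
    ∃ ε₀ C : ℝ, 0 < ε₀ ∧ 0 < C ∧
      ∀ (V : ℝ → ℝ), Function.Periodic V (2*π) → ContDiff ℝ 4 V →
        H4R (fun y => V y - Real.cos y) ≤ ε₀ →
      ∀ (k : ℝ), (∃ n : ℤ, k = α * n) → k ≠ 0 →
      ∀ (lam ε : ℝ), ε ≠ 0 →
      ∀ (φ F : ℝ → ℂ), Function.Periodic φ (2*π) → ContDiff ℝ 2 φ →
        Function.Periodic F (2*π) → ContDiff ℝ 1 F →
        (∀ y : ℝ, (V y : ℂ) * ((deriv (deriv φ) y - (k:ℂ)^2 * φ y) + φ y)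
            - ((lam : ℂ) + Complex.I * (ε : ℂ)) * (deriv (deriv φ) y - (k:ℂ)^2 * φ y) = F y) →
        |ε| * k^2 * H1k k φ ≤ C * H1k k F := by
  have hα2 : 0 < α ^ 2 - 1 := by nlinarith
  refine ⟨1, α ^ 2 / (α ^ 2 - 1), one_pos, by positivity, ?_⟩
  rintro V - hV - k ⟨n, rfl⟩ hk lam ε - φ F hper hφ - - heq
  have hαk : α ^ 2 ≤ (α * n) ^ 2 :=
    sq_le_sq_mul_intCast α (Int.cast_ne_zero.mp (right_ne_zero_of_mul hk))
  have hg := l2C_laplacianK_add_le (k := α * n) (by nlinarith) hφ hper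
  exact abs_mul_sq_mul_le hα hαk (l2C_nonneg _) (l2C_nonneg _) (sqrt_nonneg _)
    (sq_mul_H1k_sq_le hφ hper)
    ((abs_mul_sub_le_of_resolvent_eq hV.continuous hφ hper heq).trans
      (mul_le_mul_of_nonneg_left hg (l2C_nonneg _)))
    (abs_mul_l2C_le_H1k _ _)
end

section
/- Let k∈ℝ with |k|>1. If ψ:ℝ→ℂ is 2π-periodic and C², and satisfies (cos y − 1)·(ψ''(y) − k²ψ(y)) + cos(y)·ψ(y) = 0 for all y∈ℝ, then ψ≡0. (In other words, λ=1 is not an embedded eigenvalue of the linearized Euler operator around the Kolmogorov flow b(y)=cos y: the equation (b−λ)(∂_y²−k²)ψ−b''ψ=0 with λ=1 has no nontrivial periodic solution.) -/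
/-!
Every ℝ-linear functional `L` maps a solution `ψ` to a real solution `L ∘ ψ`, so it suffices to
show that real periodic solutions are `≤ 0` (then apply this to `±re` and `±im`). A real periodic
solution `f` attains its maximum at some `y₀`, where `f'' ≤ 0`. Rewriting the equation as
`(cos y - 1) f'' + (k² - (k² - 1) cos y) f = 0`, the first term is `≥ 0` at `y₀`, while the
coefficient of `f` is positive for `k² > 1/2`; hence `f y₀ ≤ 0`.
-/

open Real

theorem IsLocalMax.deriv_deriv_nonpos {f : ℝ → ℝ} {a : ℝ} (h : IsLocalMax f a)
    (hc : ContinuousAt f a) : deriv (deriv f) a ≤ 0 := by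
  by_contra! hpos
  -- By the second-derivative test `a` is also a local minimum, so `f` is locally constant.
  have hmin : IsLocalMin f a := isLocalMin_of_deriv_deriv_pos hpos h.deriv_eq_zero hc
  have hconst : f =ᶠ[nhds a] fun _ => f a := (hmin.and h).mono fun _ hx => le_antisymm hx.2 hx.1
  have : deriv (deriv f) a = 0 := by
    rw [hconst.deriv.deriv_eq]
    simp
  exact hpos.ne' this

theorem Function.Periodic.exists_forall_ge_of_continuous {f : ℝ → ℝ} {c : ℝ}
    (hp : Function.Periodic f c) (hc : c ≠ 0) (hf : Continuous f) : ∃ x, ∀ y, f y ≤ f x := by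
  obtain ⟨_, ⟨x, rfl⟩, hmax⟩ :=
    (hp.compact_of_continuous hc hf).exists_isGreatest (Set.range_nonempty f)
  exact ⟨x, fun y => hmax ⟨y, rfl⟩⟩

theorem ContinuousLinearMap.deriv_deriv_comp {F G : Type*} [NormedAddCommGroup F]
    [NormedSpace ℝ F] [NormedAddCommGroup G] [NormedSpace ℝ G] (L : F →L[ℝ] G) {f : ℝ → F}
    (hf : ContDiff ℝ 2 f) (x : ℝ) :
    deriv (deriv fun y => L (f y)) x = L (deriv (deriv f) x) := by
  have hderiv : ∀ {g : ℝ → F}, Differentiable ℝ g →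
      (deriv fun y => L (g y)) = fun y => L (deriv g y) := fun hg =>
    funext fun y => (L.hasFDerivAt.comp_hasDerivAt y (hg y).hasDerivAt).deriv
  rw [hderiv (hf.differentiable two_ne_zero),
    hderiv (g := deriv f) ((hf.iterate_deriv' 1 1).differentiable one_ne_zero)]

theorem nonpos_of_isLocalMax_of_kolmogorov_eq {k : ℝ} (hk : 1 < 2 * k ^ 2) {f : ℝ → ℝ} {y₀ : ℝ}
    (hmax : IsLocalMax f y₀) (hc : ContinuousAt f y₀)
    (heq : (cos y₀ - 1) * (deriv (deriv f) y₀ - k ^ 2 * f y₀) + cos y₀ * f y₀ = 0) :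
    f y₀ ≤ 0 := by
  have hcurv : 0 ≤ (cos y₀ - 1) * deriv (deriv f) y₀ :=
    mul_nonneg_of_nonpos_of_nonpos (by linarith [cos_le_one y₀]) (hmax.deriv_deriv_nonpos hc)
  -- The coefficient is affine in `cos y₀`, equal to `1` at `cos y₀ = 1` and `2k² - 1` at `-1`.
  have hcoeff : 0 < k ^ 2 - (k ^ 2 - 1) * cos y₀ := by
    rcases le_total (k ^ 2) 1 with hk1 | hk1 <;> nlinarith [cos_le_one y₀, neg_one_le_cos y₀]
  nlinarith

theorem nonpos_of_periodic_of_kolmogorov_eq {k : ℝ} (hk : 1 < 2 * k ^ 2) {f : ℝ → ℝ} {T : ℝ}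
    (hT : T ≠ 0) (hf : ContDiff ℝ 2 f) (hper : Function.Periodic f T)
    (heq : ∀ y, (cos y - 1) * (deriv (deriv f) y - k ^ 2 * f y) + cos y * f y = 0) (y : ℝ) :
    f y ≤ 0 := by
  obtain ⟨y₀, hy₀⟩ := hper.exists_forall_ge_of_continuous hT hf.continuous
  have hmax : IsLocalMax f y₀ := Filter.Eventually.of_forall hy₀
  exact (hy₀ y).trans (nonpos_of_isLocalMax_of_kolmogorov_eq hk hmax
    hf.continuous.continuousAt (heq y₀))

theorem ContinuousLinearMap.map_kolmogorov_eq (L : ℂ →L[ℝ] ℝ) {c k : ℝ} {a b : ℂ}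
    (h : ((c : ℂ) - 1) * (a - (k : ℂ) ^ 2 * b) + (c : ℂ) * b = 0) :
    (c - 1) * (L a - k ^ 2 * L b) + c * L b = 0 := by
  have h' : (c - 1) • (a - k ^ 2 • b) + c • b = 0 := by
    simpa only [Complex.real_smul, Complex.ofReal_sub, Complex.ofReal_pow, Complex.ofReal_one]
      using h
  simpa only [map_add, map_sub, map_smul, map_zero, smul_eq_mul] using congrArg L h'

theorem stmt5 (k : ℝ) (hk : 1 < |k|) (ψ : ℝ → ℂ) (hψ : ContDiff ℝ 2 ψ)
    (hper : Function.Periodic ψ (2 * π))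
    (heq : ∀ y : ℝ,
      ((Real.cos y : ℂ) - 1) * (deriv (deriv ψ) y - (k : ℂ) ^ 2 * ψ y)
        + (Real.cos y : ℂ) * ψ y = 0) :
    ∀ y : ℝ, ψ y = 0 := by
  have hk2 : 1 < 2 * k ^ 2 := by nlinarith [(one_lt_sq_iff_one_lt_abs k).2 hk]
  have hL : ∀ (L : ℂ →L[ℝ] ℝ) (y : ℝ), L (ψ y) ≤ 0 := fun L =>
    nonpos_of_periodic_of_kolmogorov_eq hk2 (by positivity) (L.contDiff.comp hψ) (hper.comp L)
      fun y => by rw [L.deriv_deriv_comp hψ]; exact L.map_kolmogorov_eq (heq y)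
  intro y
  apply Complex.ext
  · have := hL (-Complex.reCLM) y
    simp only [neg_apply, Complex.reCLM_apply, neg_nonpos] at this
    exact le_antisymm (hL Complex.reCLM y) this
  · have := hL (-Complex.imCLM) y
    simp only [neg_apply, Complex.imCLM_apply, neg_nonpos] at this
    exact le_antisymm (hL Complex.imCLM y) this
end

section
/- For every c₀>0, K>0 and δ>0 there exists C>0 with the following property. Let a<d with y₀:=(a+d)/2 and δ=y₀−a. Let u:[a,d]→ℝ be C³ with (Σ_{j=0}^{3}∫_a^d|u^{(j)}|²)^{1/2}≤K, u'(y₀)=0, and |u''(y)|≥c₀ for all y∈[a,d]. Let c∈ℂ∖ℝ and let k∈ℝ with |k|≥1 and |k|·|u(y₀)−c|^{1/2}≤1. Suppose ψ∈C²([a,d],ℂ) and h∈C¹([a,d],ℂ) satisfy (u(y)−c)·(ψ''(y)−k²ψ(y)) − u''(y)ψ(y) = h(y) on [a,d], and h(y₀)=0. Then |(ψ''−k²ψ)(y₀)| ≤ C·min(|u(y₀)−c|^{−3/4}, |k|^{−1/2}|u(y₀)−c|^{−1})·(‖ψ‖_{H¹_k(a,d)}+‖h‖_{H¹_k(a,d)}).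 -/
open Set MeasureTheory intervalIntegral

open Real MeasureTheory

/-- The `H¹_k` norm on an interval `(a,d)`, with derivatives taken within `s`. -/
noncomputable def H1kI (a d k : ℝ) (s : Set ℝ) (g : ℝ → ℂ) : ℝ :=
  Real.sqrt (∫ y in a..d, (‖derivWithin g s y‖^2 + k^2 * ‖g y‖^2))


section helpers
variable {E : Type*} [NormedAddCommGroup E] [NormedSpace ℝ E] [CompleteSpace E]

lemma hdw_ofReal {f : ℝ → ℝ} {f' x : ℝ} {s : Set ℝ} (hf : HasDerivWithinAt f f' s x) :
    HasDerivWithinAt (fun y => ((f y : ℝ) : ℂ)) (f' : ℂ) s x := by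
  exact hf.ofReal_comp

lemma iter2_eq {f : ℝ → E} {a d x : ℝ} (had : a < d) (hx : x ∈ Icc a d) :
    iteratedDerivWithin 2 f (Icc a d) x
      = derivWithin (derivWithin f (Icc a d)) (Icc a d) x := by
  have hs : UniqueDiffOn ℝ (Icc a d) := uniqueDiffOn_Icc had
  rw [iteratedDerivWithin_succ, iteratedDerivWithin_one]

lemma iter3_eq {f : ℝ → E} {a d x : ℝ} (had : a < d) (hx : x ∈ Icc a d) :
    iteratedDerivWithin 3 f (Icc a d) x
      = derivWithin (derivWithin (derivWithin f (Icc a d)) (Icc a d)) (Icc a d) x := by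
  have hs : UniqueDiffOn ℝ (Icc a d) := uniqueDiffOn_Icc had
  rw [iteratedDerivWithin_succ]
  exact derivWithin_congr (fun y hy => iter2_eq had hy) (iter2_eq had hx)

/-- FTC on a subinterval, with one-sided derivatives within `Icc a d`. -/
lemma ftc0 {a d : ℝ} {f f' : ℝ → E}
    (hf : ∀ y ∈ Icc a d, HasDerivWithinAt f (f' y) (Icc a d) y)
    (hc' : ContinuousOn f' (Icc a d)) {x y : ℝ} (hx : x ∈ Icc a d) (hy : y ∈ Icc a d) :
    ∫ t in x..y, f' t = f y - f x := by
  have hsub : uIcc x y ⊆ Icc a d := uIcc_subset_Icc hx hy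
  apply integral_eq_sub_of_hasDeriv_right
  · exact fun t ht => ((hf t (hsub ht)).continuousWithinAt).mono hsub
  · intro t ht
    have ht' : t ∈ Ioo a d := by
      constructor
      · exact lt_of_le_of_lt (le_min hx.1 hy.1) ht.1
      · exact lt_of_lt_of_le ht.2 (max_le hx.2 hy.2)
    have : HasDerivAt f (f' t) t :=
      (hf t (Ioo_subset_Icc_self ht')).hasDerivAt (Icc_mem_nhds ht'.1 ht'.2)
    exact this.hasDerivWithinAt
  · exact (hc'.mono hsub).intervalIntegrable

/-- Cauchy-Schwarz for interval integrals of nonneg continuous functions. -/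
lemma csineq {x y : ℝ} (hxy : x ≤ y) {f g : ℝ → ℝ}
    (hf : ContinuousOn f (Icc x y)) (hg : ContinuousOn g (Icc x y))
    (hf0 : ∀ t ∈ Icc x y, 0 ≤ f t) (hg0 : ∀ t ∈ Icc x y, 0 ≤ g t) :
    ∫ t in x..y, f t * g t
      ≤ Real.sqrt (∫ t in x..y, f t ^ 2) * Real.sqrt (∫ t in x..y, g t ^ 2) := by
  have h2 : (1:ℝ) ≤ 2 := one_le_two
  have hif : IntervalIntegrable (fun t => f t ^ 2) volume x y :=
    ((hf.pow 2).intervalIntegrable_of_Icc hxy)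
  have hig : IntervalIntegrable (fun t => g t ^ 2) volume x y :=
    ((hg.pow 2).intervalIntegrable_of_Icc hxy)
  have hF0 : 0 ≤ ∫ t in x..y, f t ^ 2 :=
    intervalIntegral.integral_nonneg hxy (fun t ht => sq_nonneg _)
  have hG0 : 0 ≤ ∫ t in x..y, g t ^ 2 :=
    intervalIntegral.integral_nonneg hxy (fun t ht => sq_nonneg _)
  set A := Real.sqrt (∫ t in x..y, f t ^ 2) with hA
  set B := Real.sqrt (∫ t in x..y, g t ^ 2) with hB
  have hA0 : 0 ≤ A := Real.sqrt_nonneg _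
  have hB0 : 0 ≤ B := Real.sqrt_nonneg _
  have hA2 : A ^ 2 = ∫ t in x..y, f t ^ 2 := Real.sq_sqrt hF0
  have hB2 : B ^ 2 = ∫ t in x..y, g t ^ 2 := Real.sq_sqrt hG0
  have key : ∀ ε : ℝ, 0 < ε →
      (∫ t in x..y, f t * g t) ≤ (ε * A ^ 2 + B ^ 2 / ε) / 2 := by
    intro ε hε
    have hpt : ∀ t ∈ Icc x y, f t * g t ≤ (ε * f t ^ 2 + g t ^ 2 / ε) / 2 := by
      intro t ht
      have h5 : (ε * f t ^ 2 + g t ^ 2 / ε) / 2 - f t * g t = (ε * f t - g t) ^ 2 / (2 * ε) := by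
        field_simp; ring
      have h6 : (0:ℝ) ≤ (ε * f t - g t) ^ 2 / (2 * ε) := by positivity
      linarith
    calc (∫ t in x..y, f t * g t)
        ≤ ∫ t in x..y, (ε * f t ^ 2 + g t ^ 2 / ε) / 2 := by
          apply intervalIntegral.integral_mono_on hxy _ _ hpt
          · exact (hf.mul hg).intervalIntegrable_of_Icc hxy
          · exact (((hif.const_mul ε).add (hig.div_const ε)).div_const 2)
      _ = (ε * A ^ 2 + B ^ 2 / ε) / 2 := by
          rw [hA2, hB2]
          rw [intervalIntegral.integral_div, intervalIntegral.integral_add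
            ((hif.const_mul ε)) (hig.div_const ε), intervalIntegral.integral_const_mul,
            intervalIntegral.integral_div]
  by_contra hcon
  push_neg at hcon
  have hI : 0 < ∫ t in x..y, f t * g t := lt_of_le_of_lt (mul_nonneg hA0 hB0) hcon
  set I := ∫ t in x..y, f t * g t with hIdef
  by_cases hAz : A = 0
  · by_cases hBz : B = 0
    · have hk := key 1 one_pos
      rw [hAz, hBz] at hk; norm_num at hk; linarith
    · have hBpos : 0 < B := lt_of_le_of_ne hB0 (Ne.symm hBz)
      have hk := key (B ^ 2 / I) (by positivity)
      rw [hAz] at hk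
      have h7 : B ^ 2 / (B ^ 2 / I) = I := by field_simp
      rw [h7] at hk; norm_num at hk; linarith
  · have hApos : 0 < A := lt_of_le_of_ne hA0 (Ne.symm hAz)
    have hk := key (I / A ^ 2) (by positivity)
    have h2 : I / A ^ 2 * A ^ 2 = I := by field_simp
    have h3 : B ^ 2 / (I / A ^ 2) = B ^ 2 * A ^ 2 / I := by
      rw [div_div_eq_mul_div]
    rw [h2, h3] at hk
    have h4 : I * I ≤ B ^ 2 * A ^ 2 := by
      have h8 : I ≤ B ^ 2 * A ^ 2 / I := by linarith
      exact (le_div_iff₀ hI).mp h8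
    have h9 : 0 < (I - A * B) * (I + A * B) :=
      mul_pos (by linarith) (by nlinarith [mul_nonneg hA0 hB0])
    nlinarith [h9, h4]

/-- Mean value point: some point has value ≤ average. -/
lemma meanpt {x y : ℝ} (hxy : x < y) {g : ℝ → ℝ} (hg : ContinuousOn g (Icc x y)) :
    ∃ z ∈ Icc x y, g z * (y - x) ≤ ∫ t in x..y, g t := by
  obtain ⟨z, hz, hmin⟩ := isCompact_Icc.exists_isMinOn (nonempty_Icc.2 hxy.le) hg
  refine ⟨z, hz, ?_⟩
  have : ∫ t in x..y, g z = g z * (y - x) := by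
    simp [intervalIntegral.integral_const, smul_eq_mul, mul_comm]
  rw [← this]
  exact intervalIntegral.integral_mono_on hxy.le intervalIntegrable_const
    (hg.intervalIntegrable_of_Icc hxy.le) (fun t ht => hmin ht)

/-- Norm of increment bounded via L² norm of derivative. -/
lemma incr {a d : ℝ} {f f' : ℝ → E}
    (hf : ∀ y ∈ Icc a d, HasDerivWithinAt f (f' y) (Icc a d) y)
    (hc' : ContinuousOn f' (Icc a d)) {x y : ℝ} (hx : x ∈ Icc a d) (hy : y ∈ Icc a d)
    (hxy : x ≤ y) :
    ‖f y - f x‖ ≤ Real.sqrt (y - x) * Real.sqrt (∫ t in x..y, ‖f' t‖ ^ 2) := by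
  have hIcc : Icc x y ⊆ Icc a d := Icc_subset_Icc hx.1 hy.2
  rw [← ftc0 hf hc' hx hy]
  calc ‖∫ t in x..y, f' t‖ ≤ ∫ t in x..y, ‖f' t‖ :=
        intervalIntegral.norm_integral_le_integral_norm hxy
    _ = ∫ t in x..y, 1 * ‖f' t‖ := by simp
    _ ≤ Real.sqrt (∫ t in x..y, (1:ℝ) ^ 2) * Real.sqrt (∫ t in x..y, ‖f' t‖ ^ 2) := by
        apply csineq hxy continuousOn_const ((hc'.mono hIcc).norm)
          (fun t ht => zero_le_one) (fun t ht => norm_nonneg _)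
    _ = Real.sqrt (y - x) * Real.sqrt (∫ t in x..y, ‖f' t‖ ^ 2) := by
        norm_num

/-- Monotonicity of the integral of a nonneg function in the interval. -/
lemma subint {a d x y : ℝ} {f : ℝ → ℝ} (had : a ≤ d) (hf : ContinuousOn f (Icc a d))
    (hf0 : ∀ r ∈ Icc a d, 0 ≤ f r) (hx : x ∈ Icc a d) (hy : y ∈ Icc a d) (hxy : x ≤ y) :
    (∫ r in x..y, f r) ≤ ∫ r in a..d, f r := by
  apply intervalIntegral.integral_mono_interval hx.1 hxy hy.2
  · exact (ae_restrict_iff' measurableSet_Ioc).2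
      (ae_of_all _ fun r hr => hf0 r (Ioc_subset_Icc_self hr))
  · exact hf.intervalIntegrable_of_Icc had

lemma norm5 {F : Type*} [SeminormedAddCommGroup F] (a b c d e : F) :
    ‖a - b - c - d - e‖ ≤ ‖a‖ + ‖b‖ + ‖c‖ + ‖d‖ + ‖e‖ := by
  calc ‖a - b - c - d - e‖ ≤ ‖a - b - c - d‖ + ‖e‖ := norm_sub_le _ _
    _ ≤ (‖a - b - c‖ + ‖d‖) + ‖e‖ := by gcongr; exact norm_sub_le _ _
    _ ≤ ((‖a - b‖ + ‖c‖) + ‖d‖) + ‖e‖ := by gcongr; exact norm_sub_le _ _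
    _ ≤ (((‖a‖ + ‖b‖) + ‖c‖) + ‖d‖) + ‖e‖ := by gcongr; exact norm_sub_le _ _
    _ = ‖a‖ + ‖b‖ + ‖c‖ + ‖d‖ + ‖e‖ := by ring

end helpers

set_option maxHeartbeats 1000000 in
theorem stmt10 (c₀ K δ : ℝ) (hc₀ : 0 < c₀) (hK : 0 < K) (hδ : 0 < δ) :
    ∃ C : ℝ, 0 < C ∧
      ∀ (a d : ℝ), a < d → (a + d)/2 - a = δ →
      ∀ (u : ℝ → ℝ), ContDiffOn ℝ 3 u (Set.Icc a d) →
        Real.sqrt (∑ j ∈ Finset.range 4,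
            ∫ y in a..d, (iteratedDerivWithin j u (Set.Icc a d) y)^2) ≤ K →
        derivWithin u (Set.Icc a d) ((a + d)/2) = 0 →
        (∀ y ∈ Set.Icc a d, c₀ ≤ |iteratedDerivWithin 2 u (Set.Icc a d) y|) →
      ∀ (c : ℂ), c.im ≠ 0 →
      ∀ (k : ℝ), 1 ≤ |k| →
        |k| * Real.sqrt ‖((u ((a + d)/2) : ℝ) : ℂ) - c‖ ≤ 1 →
      ∀ (ψ h : ℝ → ℂ), ContDiffOn ℝ 2 ψ (Set.Icc a d) → ContDiffOn ℝ 1 h (Set.Icc a d) →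
        (∀ y ∈ Set.Icc a d,
          (((u y : ℝ) : ℂ) - c)
              * (iteratedDerivWithin 2 ψ (Set.Icc a d) y - (k:ℂ)^2 * ψ y)
            - ((iteratedDerivWithin 2 u (Set.Icc a d) y : ℝ) : ℂ) * ψ y = h y) →
        h ((a + d)/2) = 0 →
        ‖iteratedDerivWithin 2 ψ (Set.Icc a d) ((a + d)/2) - (k:ℂ)^2 * ψ ((a + d)/2)‖
          ≤ C * min (‖((u ((a + d)/2) : ℝ) : ℂ) - c‖ ^ (-(3:ℝ)/4))
                (|k| ^ (-(1:ℝ)/2) * ‖((u ((a + d)/2) : ℝ) : ℂ) - c‖ ^ (-(1:ℝ)))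
            * (H1kI a d k (Set.Icc a d) ψ + H1kI a d k (Set.Icc a d) h) := by
  -- global constants
  set M : ℝ := Real.sqrt (K^2 * (1/(2*δ) + 2)) with hMdef
  have hM0 : 0 < M := Real.sqrt_pos.2 (by positivity)
  set Bc : ℝ := max 1 (16/δ^2) with hBcdef
  have hBc1 : (1:ℝ) ≤ Bc := le_max_left _ _
  set W : ℝ := (Bc + 9*M)/c₀ with hWdef
  have hW0 : 0 < W := by positivity
  set C₅ : ℝ := 3*W + 3*M^2/c₀^2 + W*K*Real.sqrt δ/c₀ + 3/c₀ with hC5def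
  have hC₅0 : 0 < C₅ := by positivity
  set C₆ : ℝ := C₅ + 3 with hC6def
  set C : ℝ := Real.sqrt 3 * M * C₆ + 1 with hCdef
  have hC0 : 0 < C := by positivity
  refine ⟨C, hC0, ?_⟩
  intro a d had hδeq u hu hKb hu1y₀ hu2low c hcim k hk hkt ψ h hψ hh heq hhy₀
  have had' : a ≤ d := had.le
  set s : Set ℝ := Set.Icc a d with hsdef
  set y₀ : ℝ := (a + d)/2 with hy₀def
  have hay₀ : y₀ = a + δ := by rw [hy₀def] at hδeq ⊢; linarith
  have hdy₀ : d = y₀ + δ := by rw [hy₀def] at hδeq ⊢; linarith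
  have hy₀s : y₀ ∈ s := ⟨by linarith, by linarith⟩
  have hS : UniqueDiffOn ℝ s := uniqueDiffOn_Icc had
  -- derivatives
  set u1 : ℝ → ℝ := derivWithin u s with hu1def
  set u2 : ℝ → ℝ := derivWithin u1 s with hu2def
  set u3 : ℝ → ℝ := derivWithin u2 s with hu3def
  set ψ1 : ℝ → ℂ := derivWithin ψ s with hψ1def
  set ψ2 : ℝ → ℂ := derivWithin ψ1 s with hψ2def
  set h1 : ℝ → ℂ := derivWithin h s with hh1def
  have hit2u : ∀ x ∈ s, iteratedDerivWithin 2 u s x = u2 x := fun x hx => iter2_eq had hx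
  have hit3u : ∀ x ∈ s, iteratedDerivWithin 3 u s x = u3 x := fun x hx => iter3_eq had hx
  have hit2ψ : ∀ x ∈ s, iteratedDerivWithin 2 ψ s x = ψ2 x := fun x hx => iter2_eq had hx
  -- regularity
  have hu1C : ContDiffOn ℝ 2 u1 s := hu.derivWithin hS (by norm_num)
  have hu2C : ContDiffOn ℝ 1 u2 s := hu1C.derivWithin hS (by norm_num)
  have hψ1C : ContDiffOn ℝ 1 ψ1 s := hψ.derivWithin hS (by norm_num)
  have Cu : ContinuousOn u s := hu.continuousOn
  have Cu1 : ContinuousOn u1 s := hu1C.continuousOn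
  have Cu2 : ContinuousOn u2 s := hu2C.continuousOn
  have Cu3 : ContinuousOn u3 s := hu2C.continuousOn_derivWithin hS le_rfl
  have Cψ : ContinuousOn ψ s := hψ.continuousOn
  have Cψ1 : ContinuousOn ψ1 s := hψ1C.continuousOn
  have Cψ2 : ContinuousOn ψ2 s := hψ1C.continuousOn_derivWithin hS le_rfl
  have Ch : ContinuousOn h s := hh.continuousOn
  have Ch1 : ContinuousOn h1 s := hh.continuousOn_derivWithin hS le_rfl
  have Hu : ∀ x ∈ s, HasDerivWithinAt u (u1 x) s x :=
    fun x hx => ((hu.differentiableOn (by norm_num)) x hx).hasDerivWithinAt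
  have Hu1 : ∀ x ∈ s, HasDerivWithinAt u1 (u2 x) s x :=
    fun x hx => ((hu1C.differentiableOn (by norm_num)) x hx).hasDerivWithinAt
  have Hu2 : ∀ x ∈ s, HasDerivWithinAt u2 (u3 x) s x :=
    fun x hx => ((hu2C.differentiableOn (by norm_num)) x hx).hasDerivWithinAt
  have Hψ' : ∀ x ∈ s, HasDerivWithinAt ψ (ψ1 x) s x :=
    fun x hx => ((hψ.differentiableOn (by norm_num)) x hx).hasDerivWithinAt
  have Hψ1 : ∀ x ∈ s, HasDerivWithinAt ψ1 (ψ2 x) s x :=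
    fun x hx => ((hψ1C.differentiableOn (by norm_num)) x hx).hasDerivWithinAt
  have Hh' : ∀ x ∈ s, HasDerivWithinAt h (h1 x) s x :=
    fun x hx => ((hh.differentiableOn (by norm_num)) x hx).hasDerivWithinAt
  -- L² bounds from K
  have hKsq : ∑ j ∈ Finset.range 4, ∫ y in a..d, (iteratedDerivWithin j u s y)^2 ≤ K^2 := by
    have h0 : 0 ≤ ∑ j ∈ Finset.range 4, ∫ y in a..d, (iteratedDerivWithin j u s y)^2 :=
      Finset.sum_nonneg fun j _ =>
        intervalIntegral.integral_nonneg had' (fun t ht => sq_nonneg _)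
    calc ∑ j ∈ Finset.range 4, ∫ y in a..d, (iteratedDerivWithin j u s y)^2
        = Real.sqrt (∑ j ∈ Finset.range 4, ∫ y in a..d, (iteratedDerivWithin j u s y)^2)^2 :=
          (Real.sq_sqrt h0).symm
      _ ≤ K^2 := by
          apply pow_le_pow_left₀ (Real.sqrt_nonneg _) hKb
  have hterm : ∀ j < 4, ∫ y in a..d, (iteratedDerivWithin j u s y)^2 ≤ K^2 := by
    intro j hj
    have h0 : ∀ i ∈ Finset.range 4, (0:ℝ) ≤ ∫ y in a..d, (iteratedDerivWithin i u s y)^2 :=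
      fun i _ => intervalIntegral.integral_nonneg had' (fun t ht => sq_nonneg _)
    exact le_trans (Finset.single_le_sum h0 (Finset.mem_range.2 hj)) hKsq
  have hInt_u2 : ∫ y in a..d, (u2 y)^2 ≤ K^2 := by
    have := hterm 2 (by norm_num)
    rwa [intervalIntegral.integral_congr (g := fun y => (u2 y)^2)
      (fun x hx => by rw [Set.uIcc_of_le had'] at hx; rw [hit2u x hx])] at this
  have hInt_u3 : ∫ y in a..d, (u3 y)^2 ≤ K^2 := by
    have := hterm 3 (by norm_num)
    rwa [intervalIntegral.integral_congr (g := fun y => (u3 y)^2)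
      (fun x hx => by rw [Set.uIcc_of_le had'] at hx; rw [hit3u x hx])] at this
  -- sup bound on u2
  have hMb : ∀ x ∈ s, |u2 x| ≤ M := by
    have hcontsq : ContinuousOn (fun r => (u2 r)^2) s := Cu2.pow 2
    obtain ⟨z, hz, hminz⟩ := meanpt had hcontsq
    have hda : d - a = 2*δ := by rw [hdy₀, hay₀]; ring
    have hz2 : (u2 z)^2 * (2*δ) ≤ K^2 := by
      rw [← hda]; exact le_trans hminz hInt_u2
    have Hsq : ∀ r ∈ s, HasDerivWithinAt (fun q => (u2 q)^2) (2*(u2 r)*(u3 r)) s r := by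
      intro r hr
      have h2 := (Hu2 r hr).mul (Hu2 r hr)
      have he : (fun q => (u2 q)^2) = fun q => u2 q * u2 q := by ext q; ring
      rw [he]; exact h2.congr_deriv (by ring)
    have hcont' : ContinuousOn (fun r => 2*(u2 r)*(u3 r)) s :=
      ((continuousOn_const.mul Cu2).mul Cu3)
    have habs : ∀ p q : ℝ, p ∈ s → q ∈ s → p ≤ q →
        |∫ r in p..q, 2*(u2 r)*(u3 r)| ≤ 2*K^2 := by
      intro p q hp hq hpq
      have hIccpq : Icc p q ⊆ s := Icc_subset_Icc hp.1 hq.2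
      have h3 : |∫ r in p..q, 2*(u2 r)*(u3 r)| ≤ ∫ r in p..q, |2*(u2 r)*(u3 r)| := by
        rw [← Real.norm_eq_abs]
        refine le_trans (intervalIntegral.norm_integral_le_integral_norm hpq) ?_
        apply le_of_eq
        apply intervalIntegral.integral_congr
        intro x hx; simp [abs_mul, Real.norm_eq_abs]
      have h4 : ∫ r in p..q, |2*(u2 r)*(u3 r)| = ∫ r in p..q, (2*|u2 r|)*|u3 r| := by
        apply intervalIntegral.integral_congr
        intro x hx; simp [abs_mul]
      have h5 : ∫ r in p..q, (2*|u2 r|)*|u3 r|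
          ≤ Real.sqrt (∫ r in p..q, (2*|u2 r|)^2) * Real.sqrt (∫ r in p..q, |u3 r|^2) := by
        exact csineq hpq (continuousOn_const.mul (Cu2.mono hIccpq).abs)
          ((Cu3.mono hIccpq).abs) (fun r hr => by positivity) (fun r hr => abs_nonneg _)
      have h6 : ∫ r in p..q, (2*|u2 r|)^2 ≤ 4*K^2 := by
        have he : ∀ r ∈ Icc a d, (2*|u2 r|)^2 = 4*(u2 r)^2 := by
          intro r hr; rw [mul_pow, sq_abs]; norm_num
        calc ∫ r in p..q, (2*|u2 r|)^2 ≤ ∫ r in a..d, (2*|u2 r|)^2 := by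
              apply subint had' ?_ (fun r hr => by positivity) hp hq hpq
              exact (continuousOn_const.mul Cu2.abs).pow 2
          _ = ∫ r in a..d, 4*(u2 r)^2 := by
              apply intervalIntegral.integral_congr
              intro x hx; rw [Set.uIcc_of_le had'] at hx; exact he x hx
          _ = 4 * ∫ r in a..d, (u2 r)^2 := by rw [intervalIntegral.integral_const_mul]
          _ ≤ 4*K^2 := by linarith [hInt_u2]
      have h7 : ∫ r in p..q, |u3 r|^2 ≤ K^2 := by
        calc ∫ r in p..q, |u3 r|^2 = ∫ r in p..q, (u3 r)^2 := by
              apply intervalIntegral.integral_congr; intro x hx; simp [sq_abs]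
          _ ≤ ∫ r in a..d, (u3 r)^2 :=
              subint had' (Cu3.pow 2) (fun r hr => sq_nonneg _) hp hq hpq
          _ ≤ K^2 := hInt_u3
      have h8 : Real.sqrt (∫ r in p..q, (2*|u2 r|)^2) ≤ 2*K := by
        refine le_trans (Real.sqrt_le_sqrt h6) ?_
        rw [show 4*K^2 = (2*K)^2 by ring, Real.sqrt_sq (by positivity)]
      have h9 : Real.sqrt (∫ r in p..q, |u3 r|^2) ≤ K := by
        refine le_trans (Real.sqrt_le_sqrt h7) ?_
        rw [Real.sqrt_sq hK.le]
      calc |∫ r in p..q, 2*(u2 r)*(u3 r)| ≤ _ := le_trans h3 (le_of_eq h4)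
        _ ≤ _ := h5
        _ ≤ (2*K)*K := by
            apply mul_le_mul h8 h9 (Real.sqrt_nonneg _) (by positivity)
        _ = 2*K^2 := by ring
    intro x hx
    have hMsq : M^2 = K^2*(1/(2*δ) + 2) := Real.sq_sqrt (by positivity)
    have hux : (u2 x)^2 ≤ M^2 := by
      rcases le_total z x with hzx | hzx
      · have hftc := ftc0 (E:=ℝ) Hsq hcont' hz hx
        have := habs z x hz hx hzx
        rw [hftc] at this
        have hz2' : (u2 z)^2 ≤ K^2*(1/(2*δ)) := by
          rw [mul_one_div, le_div_iff₀ (by linarith : (0:ℝ) < 2*δ)]; exact hz2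
        have habs' : (u2 x)^2 - (u2 z)^2 ≤ 2*K^2 := le_trans (le_abs_self _) this
        rw [hMsq]
        linarith [hz2', habs']
      · have hftc := ftc0 (E:=ℝ) Hsq hcont' hx hz
        have := habs x z hx hz hzx
        rw [hftc] at this
        have hz2' : (u2 z)^2 ≤ K^2*(1/(2*δ)) := by
          rw [mul_one_div, le_div_iff₀ (by linarith : (0:ℝ) < 2*δ)]; exact hz2
        have habs' : -(2*K^2) ≤ (u2 z)^2 - (u2 x)^2 := neg_le_of_abs_le this
        rw [hMsq]
        linarith [hz2', habs']
    calc |u2 x| = Real.sqrt ((u2 x)^2) := (Real.sqrt_sq_eq_abs _).symm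
      _ ≤ Real.sqrt (M^2) := Real.sqrt_le_sqrt hux
      _ = M := Real.sqrt_sq hM0.le
  -- t
  set t : ℝ := ‖((u y₀ : ℝ) : ℂ) - c‖ with htdef
  have ht0 : 0 < t := by
    rw [htdef, norm_pos_iff]
    intro hz
    have : (((u y₀ : ℝ) : ℂ) - c).im = 0 := by rw [hz]; rfl
    rw [Complex.sub_im, Complex.ofReal_im] at this
    exact hcim (by linarith)
  have hst0 : 0 < Real.sqrt t := Real.sqrt_pos.2 ht0
  have hk0 : (0:ℝ) < |k| := lt_of_lt_of_le one_pos hk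
  have hst1 : Real.sqrt t ≤ 1 := by
    have h1 : 1 * Real.sqrt t ≤ |k| * Real.sqrt t :=
      mul_le_mul_of_nonneg_right hk (Real.sqrt_nonneg t)
    linarith only [h1, hkt]
  have ht1 : t ≤ 1 := by
    calc t = Real.sqrt t * Real.sqrt t := (Real.mul_self_sqrt ht0.le).symm
      _ ≤ 1 * 1 := mul_le_mul hst1 hst1 hst0.le zero_le_one
      _ = 1 := by ring
  -- the scale L
  set L : ℝ := min (Real.sqrt t) (δ/4) with hLdef
  have hL0 : 0 < L := lt_min hst0 (by linarith)
  have hLst : L ≤ Real.sqrt t := min_le_left _ _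
  have hLδ : L ≤ δ/4 := min_le_right _ _
  have hL2t : L^2 ≤ t := by
    calc L^2 ≤ Real.sqrt t^2 := pow_le_pow_left₀ hL0.le hLst 2
    _ = t := Real.sq_sqrt ht0.le
  have hkL : |k| * L ≤ 1 :=
    le_trans (mul_le_mul_of_nonneg_left hLst (abs_nonneg k)) hkt
  have htB : t ≤ Bc * L^2 := by
    rcases le_total (Real.sqrt t) (δ/4) with hc1 | hc1
    · have hLe : L = Real.sqrt t := min_eq_left hc1
      have h2 : L^2 = t := by rw [hLe]; exact Real.sq_sqrt ht0.le
      rw [← h2]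
      exact le_mul_of_one_le_left (sq_nonneg L) hBc1
    · have hLe : L = δ/4 := min_eq_right hc1
      have h16 : (16/δ^2) ≤ Bc := le_max_right _ _
      have h2 : (16/δ^2) * L^2 = 1 := by rw [hLe]; field_simp; ring
      calc t ≤ 1 := ht1
        _ = (16/δ^2) * L^2 := h2.symm
        _ ≤ Bc * L^2 := mul_le_mul_of_nonneg_right h16 (sq_nonneg L)
  -- H¹ norms
  set Hψn : ℝ := H1kI a d k s ψ with hHψdef
  set Hhn : ℝ := H1kI a d k s h with hHhdef
  have hHψ0 : 0 ≤ Hψn := Real.sqrt_nonneg _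
  have hHh0 : 0 ≤ Hhn := Real.sqrt_nonneg _
  have hIψ : ContinuousOn (fun y => ‖ψ1 y‖^2 + k^2*‖ψ y‖^2) s :=
    ((Cψ1.norm.pow 2).add ((Cψ.norm.pow 2).const_smul (k^2)))
  have hIh : ContinuousOn (fun y => ‖h1 y‖^2 + k^2*‖h y‖^2) s :=
    ((Ch1.norm.pow 2).add ((Ch.norm.pow 2).const_smul (k^2)))
  have hHψsq : Hψn^2 = ∫ y in a..d, (‖ψ1 y‖^2 + k^2*‖ψ y‖^2) := by
    rw [hHψdef]
    unfold H1kI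
    exact Real.sq_sqrt (intervalIntegral.integral_nonneg had' (fun x hx => by positivity))
  have hHhsq : Hhn^2 = ∫ y in a..d, (‖h1 y‖^2 + k^2*‖h y‖^2) := by
    rw [hHhdef]
    unfold H1kI
    exact Real.sq_sqrt (intervalIntegral.integral_nonneg had' (fun x hx => by positivity))
  -- L² pieces bounded by H norms on subintervals
  have hψ1L2 : ∀ x ∈ s, ∀ y ∈ s, x ≤ y → ∫ r in x..y, ‖ψ1 r‖^2 ≤ Hψn^2 := by
    intro x hx y hy hxy
    calc ∫ r in x..y, ‖ψ1 r‖^2 ≤ ∫ r in a..d, ‖ψ1 r‖^2 :=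
          subint had' (Cψ1.norm.pow 2) (fun r hr => by positivity) hx hy hxy
      _ ≤ ∫ r in a..d, (‖ψ1 r‖^2 + k^2*‖ψ r‖^2) := by
          apply intervalIntegral.integral_mono_on had'
            ((Cψ1.norm.pow 2).intervalIntegrable_of_Icc had')
            (hIψ.intervalIntegrable_of_Icc had')
          intro r hr
          have : (0:ℝ) ≤ k^2*‖ψ r‖^2 := by positivity
          simp only [Pi.pow_apply, Pi.mul_apply]
          linarith
      _ = Hψn^2 := hHψsq.symm
  have hψL2 : ∀ x ∈ s, ∀ y ∈ s, x ≤ y → k^2 * ∫ r in x..y, ‖ψ r‖^2 ≤ Hψn^2 := by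
    intro x hx y hy hxy
    rw [← intervalIntegral.integral_const_mul]
    calc ∫ r in x..y, k^2*‖ψ r‖^2 ≤ ∫ r in a..d, k^2*‖ψ r‖^2 :=
          subint had' (continuousOn_const.mul (Cψ.norm.pow 2))
            (fun r hr => by positivity) hx hy hxy
      _ ≤ ∫ r in a..d, (‖ψ1 r‖^2 + k^2*‖ψ r‖^2) := by
          apply intervalIntegral.integral_mono_on had'
            ((continuousOn_const.mul (Cψ.norm.pow 2)).intervalIntegrable_of_Icc had')
            (hIψ.intervalIntegrable_of_Icc had')
          intro r hr
          have : (0:ℝ) ≤ ‖ψ1 r‖^2 := by positivity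
          simp only [Pi.pow_apply, Pi.mul_apply]
          linarith
      _ = Hψn^2 := hHψsq.symm
  have hh1L2 : ∀ x ∈ s, ∀ y ∈ s, x ≤ y → ∫ r in x..y, ‖h1 r‖^2 ≤ Hhn^2 := by
    intro x hx y hy hxy
    calc ∫ r in x..y, ‖h1 r‖^2 ≤ ∫ r in a..d, ‖h1 r‖^2 :=
          subint had' (Ch1.norm.pow 2) (fun r hr => by positivity) hx hy hxy
      _ ≤ ∫ r in a..d, (‖h1 r‖^2 + k^2*‖h r‖^2) := by
          apply intervalIntegral.integral_mono_on had'
            ((Ch1.norm.pow 2).intervalIntegrable_of_Icc had')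
            (hIh.intervalIntegrable_of_Icc had')
          intro r hr
          have : (0:ℝ) ≤ k^2*‖h r‖^2 := by positivity
          simp only [Pi.pow_apply, Pi.mul_apply]
          linarith
      _ = Hhn^2 := hHhsq.symm
  -- the averaging interval
  set e₂ : ℝ := y₀ + 3*L with he₂def
  have hJs : Set.Icc y₀ e₂ ⊆ s := by
    intro x hx
    constructor
    · linarith [hx.1, hay₀, hδ]
    · have := hx.2; rw [he₂def] at this; rw [hdy₀]; linarith
  -- pointwise bounds on [y₀, e₂]
  have h3L : ∀ y ∈ Set.Icc y₀ e₂, y - y₀ ≤ 3*L := by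
    intro y hy; have := hy.2; rw [he₂def] at this; linarith
  have hψincr : ∀ y ∈ Set.Icc y₀ e₂, ‖ψ y - ψ y₀‖ ≤ Real.sqrt (3*L) * Hψn := by
    intro y hy
    have hys : y ∈ s := hJs hy
    calc ‖ψ y - ψ y₀‖ ≤ Real.sqrt (y - y₀) * Real.sqrt (∫ r in y₀..y, ‖ψ1 r‖^2) :=
          incr Hψ' Cψ1 hy₀s hys hy.1
      _ ≤ Real.sqrt (3*L) * Hψn := by
          apply mul_le_mul (Real.sqrt_le_sqrt (h3L y hy)) ?_ (Real.sqrt_nonneg _)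
            (Real.sqrt_nonneg _)
          calc Real.sqrt (∫ r in y₀..y, ‖ψ1 r‖^2)
              ≤ Real.sqrt (Hψn^2) := Real.sqrt_le_sqrt (hψ1L2 y₀ hy₀s y hys hy.1)
            _ = Hψn := Real.sqrt_sq hHψ0
  have hhpt : ∀ y ∈ Set.Icc y₀ e₂, ‖h y‖ ≤ Real.sqrt (3*L) * Hhn := by
    intro y hy
    have hys : y ∈ s := hJs hy
    have hz : ‖h y‖ = ‖h y - h y₀‖ := by rw [hhy₀, sub_zero]
    rw [hz]
    calc ‖h y - h y₀‖ ≤ Real.sqrt (y - y₀) * Real.sqrt (∫ r in y₀..y, ‖h1 r‖^2) :=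
          incr Hh' Ch1 hy₀s hys hy.1
      _ ≤ Real.sqrt (3*L) * Hhn := by
          apply mul_le_mul (Real.sqrt_le_sqrt (h3L y hy)) ?_ (Real.sqrt_nonneg _)
            (Real.sqrt_nonneg _)
          calc Real.sqrt (∫ r in y₀..y, ‖h1 r‖^2)
              ≤ Real.sqrt (Hhn^2) := Real.sqrt_le_sqrt (hh1L2 y₀ hy₀s y hys hy.1)
            _ = Hhn := Real.sqrt_sq hHh0
  have hu1pt : ∀ y ∈ Set.Icc y₀ e₂, |u1 y| ≤ 3*M*L := by
    intro y hy
    have hys : y ∈ s := hJs hy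
    have hftc := ftc0 (E:=ℝ) Hu1 Cu2 hy₀s hys
    rw [hu1y₀, sub_zero] at hftc
    rw [← hftc, ← Real.norm_eq_abs]
    have hb : ∀ r ∈ Set.uIoc y₀ y, ‖u2 r‖ ≤ M := by
      intro r hr
      rw [Set.uIoc_of_le hy.1] at hr
      exact hMb r (hJs ⟨hr.1.le, le_trans hr.2 hy.2⟩)
    calc ‖∫ r in y₀..y, u2 r‖ ≤ M * |y - y₀| :=
          intervalIntegral.norm_integral_le_of_norm_le_const hb
      _ ≤ 3*M*L := by
          rw [abs_of_nonneg (by linarith [hy.1] : (0:ℝ) ≤ y - y₀)]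
          calc M * (y - y₀) ≤ M * (3*L) := mul_le_mul_of_nonneg_left (h3L y hy) hM0.le
            _ = 3*M*L := by ring
  have hupt : ∀ y ∈ Set.Icc y₀ e₂, |u y - u y₀| ≤ 9*M*L^2 := by
    intro y hy
    have hys : y ∈ s := hJs hy
    have hftc := ftc0 (E:=ℝ) Hu Cu1 hy₀s hys
    rw [← hftc, ← Real.norm_eq_abs]
    have hb : ∀ r ∈ Set.uIoc y₀ y, ‖u1 r‖ ≤ 3*M*L := by
      intro r hr
      rw [Set.uIoc_of_le hy.1] at hr
      exact hu1pt r ⟨hr.1.le, le_trans hr.2 hy.2⟩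
    calc ‖∫ r in y₀..y, u1 r‖ ≤ (3*M*L) * |y - y₀| :=
          intervalIntegral.norm_integral_le_of_norm_le_const hb
      _ ≤ 9*M*L^2 := by
          rw [abs_of_nonneg (by linarith [hy.1] : (0:ℝ) ≤ y - y₀)]
          calc (3*M*L) * (y - y₀) ≤ (3*M*L) * (3*L) :=
                mul_le_mul_of_nonneg_left (h3L y hy) (by positivity)
            _ = 9*M*L^2 := by ring
  have hucpt : ∀ y ∈ Set.Icc y₀ e₂, ‖((u y:ℝ):ℂ) - c‖ ≤ (Bc + 9*M)*L^2 := by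
    intro y hy
    calc ‖((u y:ℝ):ℂ) - c‖
        = ‖(((u y:ℝ):ℂ) - ((u y₀:ℝ):ℂ)) + (((u y₀:ℝ):ℂ) - c)‖ := by ring_nf
      _ ≤ ‖((u y:ℝ):ℂ) - ((u y₀:ℝ):ℂ)‖ + ‖((u y₀:ℝ):ℂ) - c‖ := norm_add_le _ _
      _ ≤ 9*M*L^2 + Bc*L^2 := by
          apply add_le_add ?_ (le_trans (le_of_eq rfl) htB)
          rw [← Complex.ofReal_sub, Complex.norm_real, Real.norm_eq_abs]
          exact hupt y hy
      _ = (Bc + 9*M)*L^2 := by ring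
  -- the function w and its derivative
  have hu2ne : ∀ y ∈ s, ((u2 y:ℝ):ℂ) ≠ 0 := by
    intro y hy
    have := hu2low y hy
    rw [hit2u y hy] at this
    simp only [ne_eq, Complex.ofReal_eq_zero]
    intro h0
    rw [h0] at this; simp at this; linarith
  set w : ℝ → ℂ := fun y => (((u y:ℝ):ℂ) - c)/((u2 y:ℝ):ℂ) with hwdef
  set w' : ℝ → ℂ := fun y =>
      (((u1 y:ℝ):ℂ)*((u2 y:ℝ):ℂ) - (((u y:ℝ):ℂ) - c)*((u3 y:ℝ):ℂ))/((u2 y:ℝ):ℂ)^2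
    with hw'def
  have Hw : ∀ y ∈ s, HasDerivWithinAt w (w' y) s y := by
    intro y hy
    exact ((hdw_ofReal (Hu y hy)).sub_const c).div (hdw_ofReal (Hu2 y hy)) (hu2ne y hy)
  have CuC : ContinuousOn (fun y => ((u y:ℝ):ℂ)) s :=
    Complex.continuous_ofReal.comp_continuousOn Cu
  have Cu1C : ContinuousOn (fun y => ((u1 y:ℝ):ℂ)) s :=
    Complex.continuous_ofReal.comp_continuousOn Cu1
  have Cu2C : ContinuousOn (fun y => ((u2 y:ℝ):ℂ)) s :=
    Complex.continuous_ofReal.comp_continuousOn Cu2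
  have Cu3C : ContinuousOn (fun y => ((u3 y:ℝ):ℂ)) s :=
    Complex.continuous_ofReal.comp_continuousOn Cu3
  have Cw : ContinuousOn w s := by
    exact (CuC.sub continuousOn_const).div Cu2C hu2ne
  have Cw' : ContinuousOn w' s := by
    apply ContinuousOn.div ((Cu1C.mul Cu2C).sub ((CuC.sub continuousOn_const).mul Cu3C))
      (Cu2C.pow 2)
    exact fun y hy => pow_ne_zero 2 (hu2ne y hy)
  have hu2lb : ∀ y ∈ s, c₀ ≤ ‖((u2 y:ℝ):ℂ)‖ := by
    intro y hy
    rw [Complex.norm_real, Real.norm_eq_abs]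
    have := hu2low y hy; rwa [hit2u y hy] at this
  have hwpt : ∀ y ∈ Set.Icc y₀ e₂, ‖w y‖ ≤ W * L^2 := by
    intro y hy
    have hys : y ∈ s := hJs hy
    rw [hwdef]
    simp only [norm_div]
    calc ‖((u y:ℝ):ℂ) - c‖ / ‖((u2 y:ℝ):ℂ)‖ ≤ ((Bc + 9*M)*L^2) / c₀ :=
          div_le_div₀ (by positivity) (hucpt y hy) hc₀ (hu2lb y hys)
      _ = W * L^2 := by rw [hWdef]; ring
  have hw'pt : ∀ y ∈ Set.Icc y₀ e₂, ‖w' y‖ ≤ 3*M^2*L/c₀^2 + (W/c₀)*L^2*|u3 y| := by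
    intro y hy
    have hys : y ∈ s := hJs hy
    rw [hw'def]
    simp only [norm_div]
    have hden : c₀^2 ≤ ‖((u2 y:ℝ):ℂ)^2‖ := by
      rw [norm_pow]
      exact pow_le_pow_left₀ hc₀.le (hu2lb y hys) 2
    have hnum : ‖((u1 y:ℝ):ℂ)*((u2 y:ℝ):ℂ) - (((u y:ℝ):ℂ) - c)*((u3 y:ℝ):ℂ)‖
        ≤ 3*M*L*M + (Bc + 9*M)*L^2*|u3 y| := by
      refine le_trans (norm_sub_le _ _) ?_
      rw [norm_mul, norm_mul]
      apply add_le_add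
      · apply mul_le_mul ?_ ?_ (norm_nonneg _) (by positivity)
        · rw [Complex.norm_real, Real.norm_eq_abs]; exact hu1pt y hy
        · rw [Complex.norm_real, Real.norm_eq_abs]; exact hMb y hys
      · rw [Complex.norm_real, Real.norm_eq_abs]
        exact mul_le_mul_of_nonneg_right (hucpt y hy) (abs_nonneg _)
    calc ‖_ - _‖ / ‖((u2 y:ℝ):ℂ)^2‖ ≤ (3*M*L*M + (Bc + 9*M)*L^2*|u3 y|) / c₀^2 :=
          div_le_div₀ (by positivity) hnum (by positivity) hden
      _ = 3*M^2*L/c₀^2 + (W/c₀)*L^2*|u3 y| := by rw [hWdef]; ring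
  -- the equation, rearranged
  have hψeq : ∀ y ∈ s, ψ y = w y * ψ2 y - (k:ℂ)^2 * (w y * ψ y) - h y/((u2 y:ℝ):ℂ) := by
    intro y hy
    have he := heq y hy
    rw [hit2u y hy, hit2ψ y hy] at he
    have hne := hu2ne y hy
    have hnum : (((u y:ℝ):ℂ) - c)*ψ2 y - (k:ℂ)^2*((((u y:ℝ):ℂ) - c)*ψ y)
        = ((u2 y:ℝ):ℂ)*ψ y + h y := by linear_combination he
    calc ψ y = (((u2 y:ℝ):ℂ)*ψ y + h y - h y)/((u2 y:ℝ):ℂ) := by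
          rw [add_sub_cancel_right, mul_div_cancel_left₀ _ hne]
      _ = ((((u y:ℝ):ℂ) - c)*ψ2 y - (k:ℂ)^2*((((u y:ℝ):ℂ) - c)*ψ y) - h y)/((u2 y:ℝ):ℂ) := by
          rw [hnum]
      _ = w y * ψ2 y - (k:ℂ)^2 * (w y * ψ y) - h y/((u2 y:ℝ):ℂ) := by
          rw [hwdef]; ring
  -- good points y₁ < y₂ where ψ1 is controlled
  have hy0L : y₀ + L ∈ Set.Icc y₀ e₂ := ⟨by linarith, by rw [he₂def]; linarith⟩
  have hy03L : y₀ + 3*L ∈ Set.Icc y₀ e₂ := ⟨by linarith, by rw [he₂def]⟩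
  have hsub1 : Set.Icc y₀ (y₀ + L) ⊆ s :=
    subset_trans (Set.Icc_subset_Icc le_rfl hy0L.2) hJs
  have hsub2 : Set.Icc (y₀ + 2*L) (y₀ + 3*L) ⊆ s :=
    subset_trans (Set.Icc_subset_Icc (by linarith) hy03L.2) hJs
  obtain ⟨y₁, hy₁, hm1⟩ := meanpt (show y₀ < y₀ + L by linarith)
    ((Cψ1.norm.pow 2).mono hsub1)
  obtain ⟨y₂, hy₂, hm2⟩ := meanpt (show y₀ + 2*L < y₀ + 3*L by linarith)
    ((Cψ1.norm.pow 2).mono hsub2)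
  have hy₁J : y₁ ∈ Set.Icc y₀ e₂ := ⟨hy₁.1, le_trans hy₁.2 hy0L.2⟩
  have hy₂J : y₂ ∈ Set.Icc y₀ e₂ := ⟨by linarith [hy₂.1], le_trans hy₂.2 hy03L.2⟩
  have hy₁s : y₁ ∈ s := hJs hy₁J
  have hy₂s : y₂ ∈ s := hJs hy₂J
  have h12 : y₁ ≤ y₂ := by linarith [hy₁.2, hy₂.1]
  have hgap : L ≤ y₂ - y₁ := by linarith [hy₁.2, hy₂.1]
  have hgap' : y₂ - y₁ ≤ 3*L := by linarith [hy₁.1, hy₂.2]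
  set LS : ℝ := L * Real.sqrt (3*L) with hLSdef
  have hLS0 : 0 < LS := by
    rw [hLSdef]
    exact mul_pos hL0 (Real.sqrt_pos.2 (by linarith only [hL0]))
  have hsq3L : Real.sqrt (3*L)^2 = 3*L := Real.sq_sqrt (by linarith)
  -- bounds at the good points
  have hbgen : ∀ i : ℝ, ‖ψ1 i‖^2 * L ≤ Hψn^2 → L * ‖ψ1 i‖ ≤ Real.sqrt (3*L) * Hψn := by
    intro i hkey
    have hkey2 : (L * ‖ψ1 i‖)^2 ≤ (Real.sqrt (3*L) * Hψn)^2 := by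
      rw [mul_pow, mul_pow, hsq3L]
      calc L^2 * ‖ψ1 i‖^2 = L * (‖ψ1 i‖^2 * L) := by ring
        _ ≤ L * Hψn^2 := mul_le_mul_of_nonneg_left hkey hL0.le
        _ ≤ (3*L) * Hψn^2 :=
            mul_le_mul_of_nonneg_right (by linarith only [hL0]) (sq_nonneg Hψn)
    have := Real.sqrt_le_sqrt hkey2
    rwa [Real.sqrt_sq (mul_nonneg hL0.le (norm_nonneg _)),
      Real.sqrt_sq (mul_nonneg (Real.sqrt_nonneg _) hHψ0)] at this
  have hb1 : L * ‖ψ1 y₁‖ ≤ Real.sqrt (3*L) * Hψn := by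
    apply hbgen
    have hint := hψ1L2 y₀ hy₀s (y₀ + L) (hJs hy0L) (by linarith)
    calc ‖ψ1 y₁‖^2 * L = ‖ψ1 y₁‖^2 * ((y₀ + L) - y₀) := by ring_nf
      _ ≤ _ := hm1
      _ ≤ Hψn^2 := hint
  have hb2 : L * ‖ψ1 y₂‖ ≤ Real.sqrt (3*L) * Hψn := by
    apply hbgen
    have hmem2 : y₀ + 2*L ∈ s := hJs ⟨by linarith, by rw [he₂def]; linarith⟩
    have hint := hψ1L2 (y₀ + 2*L) hmem2 (y₀ + 3*L) (hJs hy03L) (by linarith)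
    calc ‖ψ1 y₂‖^2 * L = ‖ψ1 y₂‖^2 * ((y₀ + 3*L) - (y₀ + 2*L)) := by ring_nf
      _ ≤ _ := hm2
      _ ≤ Hψn^2 := hint
  -- subset bookkeeping
  have hIccJ : Set.Icc y₁ y₂ ⊆ Set.Icc y₀ e₂ := Set.Icc_subset_Icc hy₁J.1 hy₂J.2
  have hIccJs : Set.Icc y₁ y₂ ⊆ s := subset_trans hIccJ hJs
  have huIcc : Set.uIcc y₁ y₂ = Set.Icc y₁ y₂ := Set.uIcc_of_le h12
  have hsubJs : Set.uIcc y₁ y₂ ⊆ s := by rw [huIcc]; exact hIccJs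
  have huIoc : Set.uIoc y₁ y₂ ⊆ Set.Icc y₀ e₂ := by
    rw [Set.uIoc_of_le h12]
    exact subset_trans Set.Ioc_subset_Icc_self hIccJ
  -- integration by parts
  have hibp : ∫ r in y₁..y₂, w r * ψ2 r
      = w y₂ * ψ1 y₂ - w y₁ * ψ1 y₁ - ∫ r in y₁..y₂, w' r * ψ1 r := by
    apply intervalIntegral.integral_mul_deriv_eq_deriv_mul_of_hasDerivWithinAt
      (fun x hx => (Hw x (hsubJs hx)).mono hsubJs)
      (fun x hx => (Hψ1 x (hsubJs hx)).mono hsubJs)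
      ((Cw'.mono hIccJs).intervalIntegrable_of_Icc h12)
      ((Cψ2.mono hIccJs).intervalIntegrable_of_Icc h12)
  -- splitting
  have hIw : IntervalIntegrable (fun r => w r * ψ2 r) volume y₁ y₂ :=
    ((Cw.mono hIccJs).mul (Cψ2.mono hIccJs)).intervalIntegrable_of_Icc h12
  have hIwψ : IntervalIntegrable (fun r => (k:ℂ)^2 * (w r * ψ r)) volume y₁ y₂ :=
    (continuousOn_const.mul ((Cw.mono hIccJs).mul (Cψ.mono hIccJs))).intervalIntegrable_of_Icc h12
  have hIhu : IntervalIntegrable (fun r => h r / ((u2 r:ℝ):ℂ)) volume y₁ y₂ :=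
    (((Ch.mono hIccJs).div (Cu2C.mono hIccJs))
      (fun x hx => hu2ne x (hIccJs hx))).intervalIntegrable_of_Icc h12
  have hsplit : ∫ r in y₁..y₂, ψ r
      = (∫ r in y₁..y₂, w r * ψ2 r) - (∫ r in y₁..y₂, (k:ℂ)^2 * (w r * ψ r))
        - ∫ r in y₁..y₂, h r / ((u2 r:ℝ):ℂ) := by
    rw [← intervalIntegral.integral_sub hIw hIwψ,
      ← intervalIntegral.integral_sub (hIw.sub hIwψ) hIhu]
    apply intervalIntegral.integral_congr
    intro x hx
    exact hψeq x (hsubJs hx)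
  -- boundary terms
  have hE1gen : ∀ i ∈ Set.Icc y₀ e₂, L * ‖ψ1 i‖ ≤ Real.sqrt (3*L) * Hψn →
      ‖w i * ψ1 i‖ ≤ W * LS * Hψn := by
    intro i hiJ hbi
    rw [norm_mul]
    calc ‖w i‖ * ‖ψ1 i‖ ≤ (W * L^2) * ‖ψ1 i‖ :=
          mul_le_mul_of_nonneg_right (hwpt i hiJ) (norm_nonneg _)
      _ = (W * L) * (L * ‖ψ1 i‖) := by ring
      _ ≤ (W * L) * (Real.sqrt (3*L) * Hψn) :=
          mul_le_mul_of_nonneg_left hbi (by positivity)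
      _ = W * LS * Hψn := by rw [hLSdef]; ring
  -- E2 : the ∫ w' ψ1 term
  have hint1 : ∫ r in y₁..y₂, ‖ψ1 r‖ ≤ Real.sqrt (3*L) * Hψn := by
    have hcs : ∫ r in y₁..y₂, 1 * ‖ψ1 r‖
        ≤ Real.sqrt (∫ r in y₁..y₂, (1:ℝ)^2) * Real.sqrt (∫ r in y₁..y₂, ‖ψ1 r‖^2) :=
      csineq h12 continuousOn_const ((Cψ1.mono hIccJs).norm)
        (fun r hr => zero_le_one) (fun r hr => norm_nonneg _)
    have h1 : ∫ r in y₁..y₂, (1:ℝ)^2 = y₂ - y₁ := by simp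
    calc ∫ r in y₁..y₂, ‖ψ1 r‖ = ∫ r in y₁..y₂, 1 * ‖ψ1 r‖ := by simp
      _ ≤ Real.sqrt (∫ r in y₁..y₂, (1:ℝ)^2) * Real.sqrt (∫ r in y₁..y₂, ‖ψ1 r‖^2) := hcs
      _ ≤ Real.sqrt (3*L) * Hψn := by
          rw [h1]
          apply mul_le_mul (Real.sqrt_le_sqrt hgap') ?_ (Real.sqrt_nonneg _)
            (Real.sqrt_nonneg _)
          calc Real.sqrt (∫ r in y₁..y₂, ‖ψ1 r‖^2)
              ≤ Real.sqrt (Hψn^2) := Real.sqrt_le_sqrt (hψ1L2 y₁ hy₁s y₂ hy₂s h12)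
            _ = Hψn := Real.sqrt_sq hHψ0
  have hint2 : ∫ r in y₁..y₂, |u3 r| * ‖ψ1 r‖ ≤ K * Hψn := by
    have hcs : ∫ r in y₁..y₂, |u3 r| * ‖ψ1 r‖
        ≤ Real.sqrt (∫ r in y₁..y₂, |u3 r|^2) * Real.sqrt (∫ r in y₁..y₂, ‖ψ1 r‖^2) :=
      csineq h12 ((Cu3.mono hIccJs).abs) ((Cψ1.mono hIccJs).norm)
        (fun r hr => abs_nonneg _) (fun r hr => norm_nonneg _)
    have h7 : ∫ r in y₁..y₂, |u3 r|^2 ≤ K^2 := by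
      calc ∫ r in y₁..y₂, |u3 r|^2 = ∫ r in y₁..y₂, (u3 r)^2 := by
            apply intervalIntegral.integral_congr; intro x hx; simp [sq_abs]
        _ ≤ ∫ r in a..d, (u3 r)^2 :=
            subint had' (Cu3.pow 2) (fun r hr => sq_nonneg _) hy₁s hy₂s h12
        _ ≤ K^2 := hInt_u3
    calc ∫ r in y₁..y₂, |u3 r| * ‖ψ1 r‖ ≤ _ := hcs
      _ ≤ K * Hψn := by
          apply mul_le_mul ?_ ?_ (Real.sqrt_nonneg _) hK.le
          · exact le_trans (Real.sqrt_le_sqrt h7) (le_of_eq (Real.sqrt_sq hK.le))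
          · exact le_trans (Real.sqrt_le_sqrt (hψ1L2 y₁ hy₁s y₂ hy₂s h12))
              (le_of_eq (Real.sqrt_sq hHψ0))
  have hE2 : ‖∫ r in y₁..y₂, w' r * ψ1 r‖
      ≤ (3*M^2/c₀^2) * LS * Hψn + (W*K*Real.sqrt δ/c₀) * LS * Hψn := by
    have hstep : ∫ r in y₁..y₂, ‖w' r * ψ1 r‖
        ≤ ∫ r in y₁..y₂, ((3*M^2*L/c₀^2) * ‖ψ1 r‖ + ((W/c₀)*L^2) * (|u3 r| * ‖ψ1 r‖)) := by
      apply intervalIntegral.integral_mono_on h12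
        (((Cw'.mono hIccJs).mul (Cψ1.mono hIccJs)).norm.intervalIntegrable_of_Icc h12)
      · apply ContinuousOn.intervalIntegrable_of_Icc h12
        exact (continuousOn_const.mul ((Cψ1.mono hIccJs).norm)).add
          (continuousOn_const.mul (((Cu3.mono hIccJs).abs).mul ((Cψ1.mono hIccJs).norm)))
      · intro r hr
        simp only [Pi.mul_apply]
        rw [norm_mul]
        calc ‖w' r‖ * ‖ψ1 r‖ ≤ (3*M^2*L/c₀^2 + (W/c₀)*L^2*|u3 r|) * ‖ψ1 r‖ :=
              mul_le_mul_of_nonneg_right (hw'pt r (hIccJ hr)) (norm_nonneg _)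
          _ = (3*M^2*L/c₀^2) * ‖ψ1 r‖ + ((W/c₀)*L^2) * (|u3 r| * ‖ψ1 r‖) := by ring
    have hsplit2 : ∫ r in y₁..y₂,
          ((3*M^2*L/c₀^2) * ‖ψ1 r‖ + ((W/c₀)*L^2) * (|u3 r| * ‖ψ1 r‖))
        = (3*M^2*L/c₀^2) * (∫ r in y₁..y₂, ‖ψ1 r‖)
          + ((W/c₀)*L^2) * ∫ r in y₁..y₂, |u3 r| * ‖ψ1 r‖ := by
      rw [intervalIntegral.integral_add, intervalIntegral.integral_const_mul,
        intervalIntegral.integral_const_mul]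
      · exact (continuousOn_const.mul ((Cψ1.mono hIccJs).norm)).intervalIntegrable_of_Icc h12
      · exact (continuousOn_const.mul
          (((Cu3.mono hIccJs).abs).mul ((Cψ1.mono hIccJs).norm))).intervalIntegrable_of_Icc h12
    have hL2LS : L^2 ≤ Real.sqrt δ * LS := by
      rw [hLSdef]
      have h1 : Real.sqrt L ≤ Real.sqrt δ := Real.sqrt_le_sqrt (by linarith)
      have h2 : Real.sqrt L ≤ Real.sqrt (3*L) := Real.sqrt_le_sqrt (by linarith)
      have h3 : Real.sqrt L * Real.sqrt L = L := Real.mul_self_sqrt hL0.le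
      calc L^2 = L * (Real.sqrt L * Real.sqrt L) := by rw [h3]; ring
        _ ≤ L * (Real.sqrt δ * Real.sqrt (3*L)) := by
            apply mul_le_mul_of_nonneg_left ?_ hL0.le
            exact mul_le_mul h1 h2 (Real.sqrt_nonneg _) (Real.sqrt_nonneg _)
        _ = Real.sqrt δ * (L * Real.sqrt (3*L)) := by ring
    calc ‖∫ r in y₁..y₂, w' r * ψ1 r‖ ≤ ∫ r in y₁..y₂, ‖w' r * ψ1 r‖ :=
          intervalIntegral.norm_integral_le_integral_norm h12
      _ ≤ _ := hstep
      _ = (3*M^2*L/c₀^2) * (∫ r in y₁..y₂, ‖ψ1 r‖)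
          + ((W/c₀)*L^2) * ∫ r in y₁..y₂, |u3 r| * ‖ψ1 r‖ := hsplit2
      _ ≤ (3*M^2*L/c₀^2) * (Real.sqrt (3*L) * Hψn) + ((W/c₀)*L^2) * (K * Hψn) := by
          apply add_le_add
          · exact mul_le_mul_of_nonneg_left hint1 (by positivity)
          · exact mul_le_mul_of_nonneg_left hint2 (by positivity)
      _ ≤ (3*M^2/c₀^2) * LS * Hψn + (W*K*Real.sqrt δ/c₀) * LS * Hψn := by
          apply add_le_add
          · apply le_of_eq
            rw [hLSdef]; ring
          · calc ((W/c₀)*L^2) * (K * Hψn) = ((W/c₀) * (K * Hψn)) * L^2 := by ring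
              _ ≤ ((W/c₀) * (K * Hψn)) * (Real.sqrt δ * LS) :=
                  mul_le_mul_of_nonneg_left hL2LS
                    (mul_nonneg (by positivity) (mul_nonneg hK.le hHψ0))
              _ = (W*K*Real.sqrt δ/c₀) * LS * Hψn := by ring
  -- E3 : the k² ∫ w ψ term
  have hintψ : ∫ r in y₁..y₂, ‖ψ r‖ ≤ Real.sqrt (3*L) * (Hψn / |k|) := by
    have hcs : ∫ r in y₁..y₂, 1 * ‖ψ r‖
        ≤ Real.sqrt (∫ r in y₁..y₂, (1:ℝ)^2) * Real.sqrt (∫ r in y₁..y₂, ‖ψ r‖^2) :=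
      csineq h12 continuousOn_const ((Cψ.mono hIccJs).norm)
        (fun r hr => zero_le_one) (fun r hr => norm_nonneg _)
    have h1 : ∫ r in y₁..y₂, (1:ℝ)^2 = y₂ - y₁ := by simp
    have h2 : ∫ r in y₁..y₂, ‖ψ r‖^2 ≤ Hψn^2/k^2 := by
      have hk2 : (0:ℝ) < k^2 := by rw [← sq_abs]; exact pow_pos hk0 2
      rw [le_div_iff₀ hk2, mul_comm]
      exact hψL2 y₁ hy₁s y₂ hy₂s h12
    calc ∫ r in y₁..y₂, ‖ψ r‖ = ∫ r in y₁..y₂, 1 * ‖ψ r‖ := by simp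
      _ ≤ _ := hcs
      _ ≤ Real.sqrt (3*L) * (Hψn / |k|) := by
          rw [h1]
          apply mul_le_mul (Real.sqrt_le_sqrt hgap') ?_ (Real.sqrt_nonneg _)
            (Real.sqrt_nonneg _)
          calc Real.sqrt (∫ r in y₁..y₂, ‖ψ r‖^2) ≤ Real.sqrt (Hψn^2/k^2) :=
                Real.sqrt_le_sqrt h2
            _ = Hψn / |k| := by
                rw [show Hψn^2/k^2 = (Hψn/|k|)^2 by rw [div_pow, sq_abs],
                  Real.sqrt_sq (div_nonneg hHψ0 (abs_nonneg k))]
  have hE3 : ‖∫ r in y₁..y₂, (k:ℂ)^2 * (w r * ψ r)‖ ≤ W * LS * Hψn := by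
    rw [intervalIntegral.integral_const_mul, norm_mul]
    have hknorm : ‖((k:ℝ):ℂ)^2‖ = k^2 := by
      rw [norm_pow, Complex.norm_real, Real.norm_eq_abs, sq_abs]
    rw [hknorm]
    have hwψ : ‖∫ r in y₁..y₂, w r * ψ r‖ ≤ (W*L^2) * (Real.sqrt (3*L) * (Hψn/|k|)) := by
      calc ‖∫ r in y₁..y₂, w r * ψ r‖ ≤ ∫ r in y₁..y₂, ‖w r * ψ r‖ :=
            intervalIntegral.norm_integral_le_integral_norm h12
        _ ≤ ∫ r in y₁..y₂, (W*L^2) * ‖ψ r‖ := by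
            apply intervalIntegral.integral_mono_on h12
              (((Cw.mono hIccJs).mul (Cψ.mono hIccJs)).norm.intervalIntegrable_of_Icc h12)
              ((continuousOn_const.mul ((Cψ.mono hIccJs).norm)).intervalIntegrable_of_Icc h12)
            intro r hr
            simp only [Pi.mul_apply]
            rw [norm_mul]
            exact mul_le_mul_of_nonneg_right (hwpt r (hIccJ hr)) (norm_nonneg _)
        _ = (W*L^2) * ∫ r in y₁..y₂, ‖ψ r‖ := intervalIntegral.integral_const_mul _ _
        _ ≤ (W*L^2) * (Real.sqrt (3*L) * (Hψn/|k|)) :=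
            mul_le_mul_of_nonneg_left hintψ (by positivity)
    calc k^2 * ‖∫ r in y₁..y₂, w r * ψ r‖
        ≤ k^2 * ((W*L^2) * (Real.sqrt (3*L) * (Hψn/|k|))) :=
          mul_le_mul_of_nonneg_left hwψ (by positivity)
      _ = (|k| * L) * (W * LS * Hψn) := by
          have hkne : |k| ≠ 0 := ne_of_gt hk0
          rw [sq, ← abs_mul_abs_self k, hLSdef]
          rw [show (|k| * L) * (W * (L * Real.sqrt (3*L)) * Hψn)
            = (|k| * L) * (W * (L * Real.sqrt (3*L)) * Hψn) * (|k| / |k|) by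
              rw [div_self hkne, mul_one]]
          ring
      _ ≤ 1 * (W * LS * Hψn) := by
          apply mul_le_mul_of_nonneg_right hkL
          exact mul_nonneg (mul_nonneg hW0.le hLS0.le) hHψ0
      _ = W * LS * Hψn := one_mul _
  -- E4 : the h/u'' term
  have hE4 : ‖∫ r in y₁..y₂, h r / ((u2 r:ℝ):ℂ)‖ ≤ (3/c₀) * LS * Hhn := by
    have hbd : ∀ r ∈ Set.uIoc y₁ y₂, ‖h r / ((u2 r:ℝ):ℂ)‖ ≤ Real.sqrt (3*L) * Hhn / c₀ := by
      intro r hr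
      have hrJ : r ∈ Set.Icc y₀ e₂ := huIoc hr
      rw [norm_div]
      exact div_le_div₀ (mul_nonneg (Real.sqrt_nonneg _) hHh0) (hhpt r hrJ) hc₀
        (hu2lb r (hJs hrJ))
    calc ‖∫ r in y₁..y₂, h r / ((u2 r:ℝ):ℂ)‖
        ≤ (Real.sqrt (3*L) * Hhn / c₀) * |y₂ - y₁| :=
          intervalIntegral.norm_integral_le_of_norm_le_const hbd
      _ ≤ (3/c₀) * LS * Hhn := by
          rw [abs_of_nonneg (by linarith : (0:ℝ) ≤ y₂ - y₁)]
          calc (Real.sqrt (3*L) * Hhn / c₀) * (y₂ - y₁)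
              ≤ (Real.sqrt (3*L) * Hhn / c₀) * (3*L) :=
                mul_le_mul_of_nonneg_left hgap'
                  (div_nonneg (mul_nonneg (Real.sqrt_nonneg _) hHh0) hc₀.le)
            _ = (3/c₀) * LS * Hhn := by rw [hLSdef]; ring
  -- assembling the bound on ∫ ψ
  set R : ℝ := Hψn + Hhn with hRdef
  have hψR : Hψn ≤ R := by rw [hRdef]; linarith
  have hhR : Hhn ≤ R := by rw [hRdef]; linarith
  have hR0 : 0 ≤ R := by rw [hRdef]; linarith
  have hIψJ : ‖∫ r in y₁..y₂, ψ r‖ ≤ C₅ * LS * R := by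
    rw [hsplit, hibp]
    have step := norm5 (w y₂ * ψ1 y₂) (w y₁ * ψ1 y₁) (∫ r in y₁..y₂, w' r * ψ1 r)
      (∫ r in y₁..y₂, (k:ℂ)^2 * (w r * ψ r)) (∫ r in y₁..y₂, h r / ((u2 r:ℝ):ℂ))
    refine le_trans step ?_
    have t1 := hE1gen y₂ hy₂J hb2
    have t2 := hE1gen y₁ hy₁J hb1
    have b1 : W * LS * Hψn ≤ W * LS * R := mul_le_mul_of_nonneg_left hψR (by positivity)
    have b2 : (3*M^2/c₀^2) * LS * Hψn ≤ (3*M^2/c₀^2) * LS * R :=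
      mul_le_mul_of_nonneg_left hψR (by positivity)
    have b3 : (W*K*Real.sqrt δ/c₀) * LS * Hψn ≤ (W*K*Real.sqrt δ/c₀) * LS * R :=
      mul_le_mul_of_nonneg_left hψR (by positivity)
    have b4 : (3/c₀) * LS * Hhn ≤ (3/c₀) * LS * R :=
      mul_le_mul_of_nonneg_left hhR (by positivity)
    have hsum : W * LS * R + W * LS * R + ((3*M^2/c₀^2) * LS * R
        + (W*K*Real.sqrt δ/c₀) * LS * R) + W * LS * R + (3/c₀) * LS * R
        = C₅ * LS * R := by rw [hC5def]; ring
    refine le_trans (add_le_add (add_le_add (add_le_add (add_le_add t1 t2) hE2) hE3) hE4) ?_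
    refine le_trans (add_le_add (add_le_add (add_le_add (add_le_add b1 b1)
      (add_le_add b2 b3)) b1) b4) (le_of_eq hsum)
  -- averaging
  have hIntψJ : IntervalIntegrable ψ volume y₁ y₂ :=
    (Cψ.mono hIccJs).intervalIntegrable_of_Icc h12
  have hid : ((y₂ - y₁ : ℝ):ℂ) * ψ y₀
      = (∫ r in y₁..y₂, ψ r) - ∫ r in y₁..y₂, (ψ r - ψ y₀) := by
    rw [intervalIntegral.integral_sub hIntψJ intervalIntegrable_const,
      intervalIntegral.integral_const]
    rw [Complex.real_smul]
    ring
  have hdiffb : ‖∫ r in y₁..y₂, (ψ r - ψ y₀)‖ ≤ (Real.sqrt (3*L) * Hψn) * |y₂ - y₁| := by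
    apply intervalIntegral.norm_integral_le_of_norm_le_const
    intro r hr
    exact hψincr r (huIoc hr)
  have havg : ‖ψ y₀‖ * L ≤ (C₆ * Real.sqrt (3*L) * R) * L := by
    have h1 : ‖ψ y₀‖ * (y₂ - y₁) = ‖((y₂ - y₁ : ℝ):ℂ) * ψ y₀‖ := by
      rw [norm_mul, Complex.norm_real, Real.norm_eq_abs,
        abs_of_nonneg (by linarith : (0:ℝ) ≤ y₂ - y₁)]
      ring
    have h2 : ‖((y₂ - y₁ : ℝ):ℂ) * ψ y₀‖ ≤ C₅ * LS * R + (Real.sqrt (3*L) * Hψn) * (3*L) := by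
      rw [hid]
      refine le_trans (norm_sub_le _ _) ?_
      apply add_le_add hIψJ
      refine le_trans hdiffb ?_
      rw [abs_of_nonneg (by linarith : (0:ℝ) ≤ y₂ - y₁)]
      apply mul_le_mul_of_nonneg_left hgap' (mul_nonneg (Real.sqrt_nonneg _) hHψ0)
    have h3 : ‖ψ y₀‖ * L ≤ ‖ψ y₀‖ * (y₂ - y₁) :=
      mul_le_mul_of_nonneg_left hgap (norm_nonneg _)
    have h4 : (Real.sqrt (3*L) * Hψn) * (3*L) ≤ 3 * (Real.sqrt (3*L) * R) * L := by
      calc (Real.sqrt (3*L) * Hψn) * (3*L) ≤ (Real.sqrt (3*L) * R) * (3*L) :=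
            mul_le_mul_of_nonneg_right
              (mul_le_mul_of_nonneg_left hψR (Real.sqrt_nonneg _)) (by linarith only [hL0])
        _ = 3 * (Real.sqrt (3*L) * R) * L := by ring
    have h5 : C₅ * LS * R = (C₅ * Real.sqrt (3*L) * R) * L := by rw [hLSdef]; ring
    have h6 : C₅ * Real.sqrt (3*L) * R * L + 3 * (Real.sqrt (3*L) * R) * L
        = (C₆ * Real.sqrt (3*L) * R) * L := by rw [hC6def]; ring
    calc ‖ψ y₀‖ * L ≤ ‖ψ y₀‖ * (y₂ - y₁) := h3
      _ = ‖((y₂ - y₁ : ℝ):ℂ) * ψ y₀‖ := h1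
      _ ≤ C₅ * LS * R + (Real.sqrt (3*L) * Hψn) * (3*L) := h2
      _ ≤ (C₅ * Real.sqrt (3*L) * R) * L + 3 * (Real.sqrt (3*L) * R) * L := by
          rw [← h5]; linarith [h4]
      _ = (C₆ * Real.sqrt (3*L) * R) * L := h6
  have hψy₀ : ‖ψ y₀‖ ≤ C₆ * Real.sqrt (3*L) * R := le_of_mul_le_mul_right havg hL0
  -- the equation at y₀
  have hFeq : (((u y₀:ℝ):ℂ) - c) * (ψ2 y₀ - (k:ℂ)^2 * ψ y₀) = ((u2 y₀:ℝ):ℂ) * ψ y₀ := by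
    have he := heq y₀ hy₀s
    rw [hit2u y₀ hy₀s, hit2ψ y₀ hy₀s, hhy₀] at he
    linear_combination he
  have hFnorm : t * ‖ψ2 y₀ - (k:ℂ)^2 * ψ y₀‖ = |u2 y₀| * ‖ψ y₀‖ := by
    have hn := congrArg norm hFeq
    rw [norm_mul, norm_mul, Complex.norm_real, Real.norm_eq_abs] at hn
    exact hn
  have hFb : ‖ψ2 y₀ - (k:ℂ)^2 * ψ y₀‖ * t ≤ M * (C₆ * Real.sqrt (3*L) * R) := by
    rw [mul_comm, hFnorm]
    exact mul_le_mul (hMb y₀ hy₀s) hψy₀ (norm_nonneg _) hM0.le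
  -- rpow endgame
  have hq14 : Real.sqrt (Real.sqrt t) = t^((1:ℝ)/4) := by
    rw [Real.sqrt_eq_rpow, Real.sqrt_eq_rpow, ← Real.rpow_mul ht0.le]
    norm_num
  have ht14 : Real.sqrt (3*L) ≤ Real.sqrt 3 * t^((1:ℝ)/4) := by
    rw [Real.sqrt_mul (by norm_num : (0:ℝ) ≤ 3)]
    apply mul_le_mul_of_nonneg_left ?_ (Real.sqrt_nonneg 3)
    rw [← hq14]
    exact Real.sqrt_le_sqrt hLst
  have hmin : min (t ^ (-(3:ℝ)/4)) (|k| ^ (-(1:ℝ)/2) * t ^ (-(1:ℝ))) = t ^ (-(3:ℝ)/4) := by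
    apply min_eq_left
    have h14 : t^((1:ℝ)/4) ≤ |k|^(-(1:ℝ)/2) := by
      have hkp : (0:ℝ) < |k|^((1:ℝ)/2) := Real.rpow_pos_of_pos hk0 _
      rw [show (-(1:ℝ)/2) = -((1:ℝ)/2) by norm_num, Real.rpow_neg hk0.le, ← one_div,
        le_div_iff₀ hkp]
      have hrw : t^((1:ℝ)/4) * |k|^((1:ℝ)/2) = (|k| * Real.sqrt t)^((1:ℝ)/2) := by
        rw [Real.mul_rpow hk0.le (Real.sqrt_nonneg t), Real.sqrt_eq_rpow,
          ← Real.rpow_mul ht0.le]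
        norm_num
        ring
      rw [hrw]
      exact Real.rpow_le_one (by positivity) hkt (by norm_num)
    calc t^(-(3:ℝ)/4) = t^((1:ℝ)/4) * t^(-(1:ℝ)) := by
          rw [← Real.rpow_add ht0]; norm_num
      _ ≤ |k|^(-(1:ℝ)/2) * t^(-(1:ℝ)) :=
          mul_le_mul_of_nonneg_right h14 (Real.rpow_nonneg ht0.le _)
  have hmul34 : t^(-(3:ℝ)/4) * t = t^((1:ℝ)/4) := by
    nth_rewrite 2 [← Real.rpow_one t]
    rw [← Real.rpow_add ht0]
    norm_num
  -- final
  rw [hit2ψ y₀ hy₀s, hmin]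
  have hfinal : ‖ψ2 y₀ - (k:ℂ)^2 * ψ y₀‖ * t ≤ (Real.sqrt 3 * M * C₆) * (t^(-(3:ℝ)/4) * t) * R := by
    calc ‖ψ2 y₀ - (k:ℂ)^2 * ψ y₀‖ * t ≤ M * (C₆ * Real.sqrt (3*L) * R) := hFb
      _ ≤ M * (C₆ * (Real.sqrt 3 * t^((1:ℝ)/4)) * R) := by
          apply mul_le_mul_of_nonneg_left ?_ hM0.le
          apply mul_le_mul_of_nonneg_right ?_ hR0
          exact mul_le_mul_of_nonneg_left ht14 (by rw [hC6def]; linarith only [hC₅0])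
      _ = (Real.sqrt 3 * M * C₆) * (t^(-(3:ℝ)/4) * t) * R := by rw [hmul34]; ring
  have hC' : (Real.sqrt 3 * M * C₆) * t^(-(3:ℝ)/4) * R ≤ C * t^(-(3:ℝ)/4) * R := by
    apply mul_le_mul_of_nonneg_right ?_ hR0
    apply mul_le_mul_of_nonneg_right ?_ (Real.rpow_nonneg ht0.le _)
    rw [hCdef]; linarith
  have := le_of_mul_le_mul_right (by
    calc ‖ψ2 y₀ - (k:ℂ)^2 * ψ y₀‖ * t ≤ (Real.sqrt 3 * M * C₆) * (t^(-(3:ℝ)/4) * t) * R :=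
          hfinal
      _ = ((Real.sqrt 3 * M * C₆) * t^(-(3:ℝ)/4) * R) * t := by ring) ht0
  calc ‖ψ2 y₀ - (k:ℂ)^2 * ψ y₀‖ ≤ (Real.sqrt 3 * M * C₆) * t^(-(3:ℝ)/4) * R := this
    _ ≤ C * t^(-(3:ℝ)/4) * R := hC'
end
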